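/- arXiv:1903.00451 — 6 statements merged into one kernel-verified Lean document; each statement's English description precedes it below -/
import Mathlib

section
/- Let 𝒜 be a unital prime ∗-algebra over ℂ containing a nontrivial projection, and let Φ: 𝒜 → 𝒜 be a map (not assumed additive or linear) satisfying Φ(A ⋄ B ⋄ C) = Φ(A) ⋄ B ⋄ C + A ⋄ Φ(B) ⋄ C + A ⋄ B ⋄ Φ(C) for all A, B, C ∈ 𝒜. Then Φ is additive, i.e., Φ(A + B) = Φ(A) + Φ(B) for all A, B ∈ 𝒜. -/
/-- The ∗-Jordan product `A ⋄ B = AB + BA*`. -/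
def sJordan {A : Type*} [Ring A] [StarRing A] (x y : A) : A :=
  x * y + y * star x

/-- The triple product `A ⋄ B ⋄ C = (A ⋄ B) ⋄ C`. -/
def sJordanTriple {A : Type*} [Ring A] [StarRing A] (x y z : A) : A :=
  sJordan (sJordan x y) z


set_option linter.unusedSectionVars false
set_option maxHeartbeats 1000000

namespace Stmt0Aux

variable {A : Type*} [Ring A] [Algebra ℂ A] [StarRing A] [StarModule ℂ A]

local notation "𝕋" => sJordanTriple

lemma T_ex (a b c : A) :
    𝕋 a b c = a*b*c + b*star a*c + c*(star b*star a) + c*(a*star b) := by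
  simp only [sJordanTriple, sJordan, star_add, star_mul, star_star, add_mul, mul_add]
  abel

lemma T_add1 (x y a b : A) : 𝕋 (a+b) x y = 𝕋 a x y + 𝕋 b x y := by
  simp only [T_ex, star_add, add_mul, mul_add]; abel

lemma T_add2 (x y a b : A) : 𝕋 x (a+b) y = 𝕋 x a y + 𝕋 x b y := by
  simp only [T_ex, star_add, add_mul, mul_add]; abel

lemma T_add3 (x y a b : A) : 𝕋 x y (a+b) = 𝕋 x y a + 𝕋 x y b := by
  simp only [T_ex, star_add, add_mul, mul_add]; abel

lemma T1_sub (x y a b : A) : 𝕋 (a-b) x y = 𝕋 a x y - 𝕋 b x y := by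
  simp only [T_ex, star_sub, sub_mul, mul_sub]; abel

lemma T2_sub (x y a b : A) : 𝕋 x (a-b) y = 𝕋 x a y - 𝕋 x b y := by
  simp only [T_ex, star_sub, sub_mul, mul_sub]; abel

lemma T3_sub (x y a b : A) : 𝕋 x y (a-b) = 𝕋 x y a - 𝕋 x y b := by
  simp only [T_ex, star_sub, sub_mul, mul_sub]; abel

lemma lm {a b c : A} (h : a * b = c) (z : A) : a * (b * z) = c * z := by
  rw [← mul_assoc, h]

lemma mulL {e f m : A} (he : e*e = e) (h : e*m*f = m) : e*m = m := by
  conv_lhs => rw [← h]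
  rw [← mul_assoc, ← mul_assoc, he]
  exact h

lemma mulR {e f m : A} (hf : f*f = f) (h : e*m*f = m) : m*f = m := by
  conv_lhs => rw [← h]
  rw [mul_assoc, hf]
  exact h

lemma mul0L {g e m : A} (hge : g*e = 0) (hem : e*m = m) : g*m = 0 := by
  rw [← hem, ← mul_assoc, hge, zero_mul]

lemma mul0R {f g m : A} (hfg : f*g = 0) (hmf : m*f = m) : m*g = 0 := by
  rw [← hmf, mul_assoc, hfg, mul_zero]

lemma starCorner {e f m : A} (hse : star e = e) (hsf : star f = f)
    (h : e*m*f = m) : f * star m * e = star m := by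
  have h2 := congrArg star h
  rw [star_mul, star_mul, hse, hsf, ← mul_assoc] at h2
  exact h2

lemma cancel_smul {c : ℂ} (hc : c ≠ 0) {x : A} (h : c • x = 0) : x = 0 := by
  have h2 := congrArg (fun z => c⁻¹ • z) h
  simpa [smul_smul, inv_mul_cancel₀ hc] using h2

lemma cancel_two {x : A} (h : x + x = 0) : x = 0 := by
  refine cancel_smul (c := 2) (by norm_num) ?_
  rw [two_smul]; exact h

def Hphi (Φ : A → A) : Prop :=
  ∀ a b c : A, Φ (𝕋 a b c) = 𝕋 (Φ a) b c + 𝕋 a (Φ b) c + 𝕋 a b (Φ c)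

def Hpr (A : Type*) [Ring A] : Prop :=
  ∀ a b : A, (∀ x : A, a * x * b = 0) → a = 0 ∨ b = 0

structure PQ (p q : A) : Prop where
  sum : p + q = 1
  sp : star p = p
  sq : star q = q
  pp : p * p = p
  qq : q * q = q
  pq : p * q = 0
  qp : q * p = 0
  p0 : p ≠ 0
  q0 : q ≠ 0

lemma PQ.symm {p q : A} (h : PQ p q) : PQ q p :=
  ⟨by rw [add_comm]; exact h.sum, h.sq, h.sp, h.qq, h.pp, h.qp, h.pq, h.q0, h.p0⟩

variable {Φ : A → A} {p q : A}

lemma phi_zero (hΦ : Hphi Φ) : Φ 0 = 0 := by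
  have h := hΦ 0 0 0
  simpa [T_ex] using h

lemma key1 (hΦ : Hphi Φ) (x y z w : A) :
    𝕋 (Φ (z+w) - Φ z - Φ w) x y
      = Φ (𝕋 z x y + 𝕋 w x y) - Φ (𝕋 z x y) - Φ (𝕋 w x y) := by
  rw [T1_sub, T1_sub, ← T_add1, hΦ, hΦ, hΦ]
  simp only [T_add1, T_add2, T_add3]
  abel

lemma key2 (hΦ : Hphi Φ) (x y z w : A) :
    𝕋 x (Φ (z+w) - Φ z - Φ w) y
      = Φ (𝕋 x z y + 𝕋 x w y) - Φ (𝕋 x z y) - Φ (𝕋 x w y) := by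
  rw [T2_sub, T2_sub, ← T_add2, hΦ, hΦ, hΦ]
  simp only [T_add1, T_add2, T_add3]
  abel

lemma key3 (hΦ : Hphi Φ) (x y z w : A) :
    𝕋 x y (Φ (z+w) - Φ z - Φ w)
      = Φ (𝕋 x y z + 𝕋 x y w) - Φ (𝕋 x y z) - Φ (𝕋 x y w) := by
  rw [T3_sub, T3_sub, ← T_add3, hΦ, hΦ, hΦ]
  simp only [T_add1, T_add2, T_add3]
  abel

lemma T_half (W z : A) :
    𝕋 (((1:ℂ)/2) • (1:A)) W z = W * z + z * star W := by
  have hs : star (((1:ℂ)/2) • (1:A)) = ((1:ℂ)/2) • (1:A) := by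
    rw [star_smul, star_one]
    norm_num
  simp only [T_ex, hs, smul_mul_assoc, mul_smul_comm, one_mul, mul_one]
  module

lemma decomp (hpq : p + q = 1) (m : A) :
    m = p*m*p + p*m*q + q*m*p + q*m*q := by
  have h : (p + q) * m * (p + q) = m := by rw [hpq, one_mul, mul_one]
  nth_rewrite 1 [← h]
  simp only [add_mul, mul_add]
  abel

lemma sub2_eq {x a b : A} (h : x - a - b = 0) : x = a + b := by
  rw [sub_sub, sub_eq_zero] at h; exact h

lemma sub3_eq {x a b c : A} (h : x - a - b - c = 0) : x = a + b + c := by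
  rw [sub_sub, sub_sub, sub_eq_zero] at h
  rw [h]; abel

lemma sub4_eq {x a b c d : A} (h : x - a - b - c - d = 0) : x = a + b + c + d := by
  rw [sub_sub, sub_sub, sub_sub, sub_eq_zero] at h
  rw [h]; abel

/-- Claim 2: additivity across the two off-diagonal corners. -/
lemma claim2 (hΦ : Hphi Φ) (hP : PQ p q) {u v : A}
    (hu : p * u * q = u) (hv : q * v * p = v) : Φ (u + v) = Φ u + Φ v := by
  obtain ⟨hpq, hsp, hsq, hpp, hqq, hpq0, hqp0, hp0, hq0⟩ := hP
  have hu1 : p*u = u := mulL hpp hu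
  have hu2 : u*q = u := mulR hqq hu
  have hu3 : q*u = 0 := mul0L hqp0 hu1
  have hu4 : u*p = 0 := mul0R hqp0 hu2
  have hus : q * star u * p = star u := starCorner hsp hsq hu
  have su1 : q*star u = star u := mulL hqq hus
  have su2 : star u*p = star u := mulR hpp hus
  have su3 : p*star u = 0 := mul0L hpq0 su1
  have su4 : star u*q = 0 := mul0R hpq0 su2
  have hv1 : q*v = v := mulL hqq hv
  have hv2 : v*p = v := mulR hpp hv
  have hv3 : p*v = 0 := mul0L hpq0 hv1
  have hv4 : v*q = 0 := mul0R hpq0 hv2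
  have hvs : p * star v * q = star v := starCorner hsq hsp hv
  have sv1 : p*star v = star v := mulL hpp hvs
  have sv2 : star v*q = star v := mulR hqq hvs
  have sv3 : q*star v = 0 := mul0L hqp0 sv1
  have sv4 : star v*p = 0 := mul0R hqp0 sv2
  obtain ⟨M, hM⟩ : ∃ M, M = Φ (u+v) - Φ u - Φ v := ⟨_, rfl⟩
  -- (a) first slot at (q,q) : kills v
  have hv0 : 𝕋 v q q = 0 := by
    simp [T_ex, mul_assoc, hsq, hv4, sv3, lm hv4, lm sv3, lm hqq, hqq]
  have k1 : 𝕋 M q q = 0 := by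
    have h := key1 hΦ q q u v
    rw [hv0, ← hM] at h
    simpa [phi_zero hΦ] using h
  have e12 : p * M * q = 0 := by
    have h := congrArg (fun z => p * z * q) k1
    simp only [T_ex, mul_assoc, mul_zero, zero_mul, add_zero, zero_add, mul_add,
      lm hqq, hqq, lm hpq0, hpq0] at h
    simpa [mul_assoc] using h
  -- (b) first slot at (p,p) : kills u
  have hu0 : 𝕋 u p p = 0 := by
    simp [T_ex, mul_assoc, hsp, hu4, su3, lm hu4, lm su3, lm hpp, hpp]
  have k2 : 𝕋 M p p = 0 := by
    have h := key1 hΦ p p u v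
    rw [hu0, ← hM] at h
    simpa [phi_zero hΦ] using h
  have e21 : q * M * p = 0 := by
    have h := congrArg (fun z => q * z * p) k2
    simp only [T_ex, mul_assoc, mul_zero, zero_mul, add_zero, zero_add, mul_add,
      lm hpp, hpp, lm hqp0, hqp0] at h
    simpa [mul_assoc] using h
  -- (c) third slot with W = p - q kills both
  have hWu : 𝕋 (((1:ℂ)/2) • (1:A)) (p - q) u = 0 := by
    rw [T_half, star_sub, hsp, hsq, sub_mul, mul_sub, hu1, hu3, hu4, hu2]
    abel
  have hWv : 𝕋 (((1:ℂ)/2) • (1:A)) (p - q) v = 0 := by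
    rw [T_half, star_sub, hsp, hsq, sub_mul, mul_sub, hv3, hv1, hv2, hv4]
    abel
  have k3 : 𝕋 (((1:ℂ)/2) • (1:A)) (p - q) M = 0 := by
    have h := key3 hΦ (((1:ℂ)/2) • (1:A)) (p - q) u v
    rw [hWu, hWv, ← hM] at h
    simpa [phi_zero hΦ] using h
  rw [T_half, star_sub, hsp, hsq] at k3
  have k3' : p*M + M*p = q*M + M*q := by
    rw [← sub_eq_zero]
    calc (p*M + M*p) - (q*M + M*q) = (p-q)*M + M*(p-q) := by
          rw [sub_mul, mul_sub]; abel
      _ = 0 := k3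
  have e11 : p * M * p = 0 := by
    have h := congrArg (fun z => p * z * p) k3'
    simp only [mul_add, add_mul, mul_assoc, lm hpp, hpp, lm hpq0, hpq0, lm hqp0, hqp0,
      mul_zero, zero_mul, add_zero, zero_add] at h
    have := cancel_two h
    simpa [mul_assoc] using this
  have e22 : q * M * q = 0 := by
    have h := congrArg (fun z => q * z * q) k3'
    simp only [mul_add, add_mul, mul_assoc, lm hqq, hqq, lm hpq0, hpq0, lm hqp0, hqp0,
      mul_zero, zero_mul, add_zero, zero_add] at h
    have := cancel_two h.symm
    simpa [mul_assoc] using this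
  have hM0 : M = 0 := by
    have hd := decomp hpq M
    rw [e11, e12, e21, e22] at hd
    simpa using hd
  rw [hM] at hM0
  exact sub2_eq hM0


lemma claim2sym (hΦ : Hphi Φ) (hP : PQ p q) {u v : A}
    (hu : q * u * p = u) (hv : p * v * q = v) : Φ (u + v) = Φ u + Φ v := by
  rw [add_comm u v, add_comm (Φ u) (Φ v)]
  exact claim2 hΦ hP hv hu

/-- Corner support: for u,v ∈ A12, Φ(u+v) - Φu - Φv lies in the (p,q) corner. -/
lemma cs12 (hΦ : Hphi Φ) (hP : PQ p q) {u v : A}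
    (hu : p * u * q = u) (hv : p * v * q = v) :
    p * (Φ (u+v) - Φ u - Φ v) * q = Φ (u+v) - Φ u - Φ v := by
  obtain ⟨hpq, hsp, hsq, hpp, hqq, hpq0, hqp0, hp0, hq0⟩ := hP
  have hu1 : p*u = u := mulL hpp hu
  have hu2 : u*q = u := mulR hqq hu
  have hu3 : q*u = 0 := mul0L hqp0 hu1
  have hu4 : u*p = 0 := mul0R hqp0 hu2
  have hus : q * star u * p = star u := starCorner hsp hsq hu
  have su1 : q*star u = star u := mulL hqq hus
  have su2 : star u*p = star u := mulR hpp hus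
  have su3 : p*star u = 0 := mul0L hpq0 su1
  have su4 : star u*q = 0 := mul0R hpq0 su2
  have hv1 : p*v = v := mulL hpp hv
  have hv2 : v*q = v := mulR hqq hv
  have hv3 : q*v = 0 := mul0L hqp0 hv1
  have hv4 : v*p = 0 := mul0R hqp0 hv2
  have hvs : q * star v * p = star v := starCorner hsp hsq hv
  have sv1 : q*star v = star v := mulL hqq hvs
  have sv2 : star v*p = star v := mulR hpp hvs
  have sv3 : p*star v = 0 := mul0L hpq0 sv1
  have sv4 : star v*q = 0 := mul0R hpq0 sv2
  obtain ⟨M, hM⟩ : ∃ M, M = Φ (u+v) - Φ u - Φ v := ⟨_, rfl⟩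
  -- (a) third slot with W = p - q kills both
  have hWu : 𝕋 (((1:ℂ)/2) • (1:A)) (p - q) u = 0 := by
    rw [T_half, star_sub, hsp, hsq, sub_mul, mul_sub, hu1, hu3, hu4, hu2]
    abel
  have hWv : 𝕋 (((1:ℂ)/2) • (1:A)) (p - q) v = 0 := by
    rw [T_half, star_sub, hsp, hsq, sub_mul, mul_sub, hv1, hv3, hv4, hv2]
    abel
  have k3 : 𝕋 (((1:ℂ)/2) • (1:A)) (p - q) M = 0 := by
    have h := key3 hΦ (((1:ℂ)/2) • (1:A)) (p - q) u v
    rw [hWu, hWv, ← hM] at h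
    simpa [phi_zero hΦ] using h
  rw [T_half, star_sub, hsp, hsq] at k3
  have k3' : p*M + M*p = q*M + M*q := by
    rw [← sub_eq_zero]
    calc (p*M + M*p) - (q*M + M*q) = (p-q)*M + M*(p-q) := by
          rw [sub_mul, mul_sub]; abel
      _ = 0 := k3
  have e11 : p * M * p = 0 := by
    have h := congrArg (fun z => p * z * p) k3'
    simp only [mul_add, add_mul, mul_assoc, lm hpp, hpp, lm hpq0, hpq0, lm hqp0, hqp0,
      mul_zero, zero_mul, add_zero, zero_add] at h
    have := cancel_two h
    simpa [mul_assoc] using this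
  have e22 : q * M * q = 0 := by
    have h := congrArg (fun z => q * z * q) k3'
    simp only [mul_add, add_mul, mul_assoc, lm hqq, hqq, lm hpq0, hpq0, lm hqp0, hqp0,
      mul_zero, zero_mul, add_zero, zero_add] at h
    have := cancel_two h.symm
    simpa [mul_assoc] using this
  -- (b) first slot at (p, 1): kills both u and v
  have hu0 : 𝕋 u p 1 = 0 := by
    simp [T_ex, mul_assoc, hsp, hu4, su3, lm hu4, lm su3, lm hpp, hpp]
  have hv0 : 𝕋 v p 1 = 0 := by
    simp [T_ex, mul_assoc, hsp, hv4, sv3, lm hv4, lm sv3, lm hpp, hpp]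
  have k1 : 𝕋 M p 1 = 0 := by
    have h := key1 hΦ p 1 u v
    rw [hu0, hv0, ← hM] at h
    simpa [phi_zero hΦ] using h
  have e21 : q * M * p = 0 := by
    have h := congrArg (fun z => q * z * p) k1
    simp only [T_ex, mul_assoc, one_mul, mul_one, hsp, mul_add, add_mul,
      lm hpp, hpp, lm hqp0, hqp0, mul_zero, zero_mul, add_zero, zero_add] at h
    have := cancel_two h
    simpa [mul_assoc] using this
  have hcor : M = p * M * q := by
    have hd := decomp hpq M
    rw [e11, e21, e22] at hd
    simpa using hd
  rw [← hM, ← hcor]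


/-- Pair: u ∈ A11, w ∈ A12. -/
lemma pair_11_12 (hΦ : Hphi Φ) (hPr : Hpr A) (hP : PQ p q) {u w : A}
    (hu : p * u * p = u) (hw : p * w * q = w) : Φ (u + w) = Φ u + Φ w := by
  obtain ⟨hpq, hsp, hsq, hpp, hqq, hpq0, hqp0, hp0, hq0⟩ := hP
  have hu1 : p*u = u := mulL hpp hu
  have hu2 : u*p = u := mulR hpp hu
  have hu3 : q*u = 0 := mul0L hqp0 hu1
  have hu4 : u*q = 0 := mul0R hpq0 hu2
  have hus : p * star u * p = star u := starCorner hsp hsp hu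
  have su1 : p*star u = star u := mulL hpp hus
  have su2 : star u*p = star u := mulR hpp hus
  have su3 : q*star u = 0 := mul0L hqp0 su1
  have su4 : star u*q = 0 := mul0R hpq0 su2
  have hw1 : p*w = w := mulL hpp hw
  have hw2 : w*q = w := mulR hqq hw
  have hw3 : q*w = 0 := mul0L hqp0 hw1
  have hw4 : w*p = 0 := mul0R hqp0 hw2
  have hws : q * star w * p = star w := starCorner hsp hsq hw
  have sw1 : q*star w = star w := mulL hqq hws
  have sw2 : star w*p = star w := mulR hpp hws
  have sw3 : p*star w = 0 := mul0L hpq0 sw1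
  have sw4 : star w*q = 0 := mul0R hpq0 sw2
  obtain ⟨M, hM⟩ : ∃ M, M = Φ (u+w) - Φ u - Φ w := ⟨_, rfl⟩
  -- (a) third slot with W = q : kills u
  have hWu : 𝕋 (((1:ℂ)/2) • (1:A)) q u = 0 := by
    rw [T_half, hsq, hu3, hu4, add_zero]
  have k3 : 𝕋 (((1:ℂ)/2) • (1:A)) q M = 0 := by
    have h := key3 hΦ (((1:ℂ)/2) • (1:A)) q u w
    rw [hWu, ← hM] at h
    simpa [phi_zero hΦ] using h
  rw [T_half, hsq] at k3
  have e12 : p * M * q = 0 := by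
    have h := congrArg (fun z => p * z * q) k3
    simp only [mul_add, add_mul, mul_assoc, lm hqq, hqq, lm hpq0, hpq0,
      mul_zero, zero_mul, add_zero, zero_add] at h
    simpa [mul_assoc] using h
  have e21 : q * M * p = 0 := by
    have h := congrArg (fun z => q * z * p) k3
    simp only [mul_add, add_mul, mul_assoc, lm hqq, hqq, lm hqp0, hqp0,
      mul_zero, zero_mul, add_zero, zero_add] at h
    simpa [mul_assoc] using h
  have e22 : q * M * q = 0 := by
    have h := congrArg (fun z => q * z * q) k3
    simp only [mul_add, add_mul, mul_assoc, lm hqq, hqq,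
      mul_zero, zero_mul, add_zero, zero_add] at h
    have := cancel_two h
    simpa [mul_assoc] using this
  have hMc : p * M * p = M := by
    have hd := decomp hpq M
    rw [e12, e21, e22] at hd
    simpa using hd.symm
  have hM1 : p*M = M := mulL hpp hMc
  have hM2 : M*p = M := mulR hpp hMc
  have hM3 : q*M = 0 := mul0L hqp0 hM1
  have hM4 : M*q = 0 := mul0R hpq0 hM2
  have hMs : p * star M * p = star M := starCorner hsp hsp hMc
  have sM1 : p*star M = star M := mulL hpp hMs
  have sM2 : star M*p = star M := mulR hpp hMs
  have sM3 : q*star M = 0 := mul0L hqp0 sM1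
  have sM4 : star M*q = 0 := mul0R hpq0 sM2
  -- (b) first slot at (p*x*q, q) : kills w, detects M
  have hxM : ∀ x : A, M * x * q = 0 := by
    intro x
    have hw0 : 𝕋 w (p*x*q) q = 0 := by
      simp [T_ex, mul_assoc, star_mul, hsp, hsq, lm hw4, lm hw3, lm hw2, lm sw4, lm sw3,
        lm hpp, lm hqq, lm hpq0, lm hqp0, hpp, hqq, hpq0, hqp0, sw4, sw3, hw4, hw3]
    have k1 : 𝕋 M (p*x*q) q = 0 := by
      have h := key1 hΦ (p*x*q) q u w
      rw [hw0, ← hM] at h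
      simpa [phi_zero hΦ] using h
    have h := congrArg (fun z => p * z * q) k1
    simp only [T_ex, mul_assoc, mul_add, add_mul, star_mul, hsp, hsq,
      lm hM2, lm hM1, lm sM4, lm sM1, lm hM4,
      lm hpp, lm hqq, lm hpq0, lm hqp0, hpp, hqq, hpq0, hqp0, sM4, sM1, hM4,
      mul_zero, zero_mul, add_zero, zero_add] at h
    simpa [mul_assoc] using h
  have hM0 : M = 0 := (hPr M q hxM).resolve_right hq0
  rw [hM] at hM0
  exact sub2_eq hM0

/-- Pair: u ∈ A11, w ∈ A21. -/
lemma pair_11_21 (hΦ : Hphi Φ) (hPr : Hpr A) (hP : PQ p q) {u w : A}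
    (hu : p * u * p = u) (hw : q * w * p = w) : Φ (u + w) = Φ u + Φ w := by
  obtain ⟨hpq, hsp, hsq, hpp, hqq, hpq0, hqp0, hp0, hq0⟩ := hP
  have hu1 : p*u = u := mulL hpp hu
  have hu2 : u*p = u := mulR hpp hu
  have hu3 : q*u = 0 := mul0L hqp0 hu1
  have hu4 : u*q = 0 := mul0R hpq0 hu2
  have hus : p * star u * p = star u := starCorner hsp hsp hu
  have su1 : p*star u = star u := mulL hpp hus
  have su2 : star u*p = star u := mulR hpp hus
  have su3 : q*star u = 0 := mul0L hqp0 su1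
  have su4 : star u*q = 0 := mul0R hpq0 su2
  have hw1 : q*w = w := mulL hqq hw
  have hw2 : w*p = w := mulR hpp hw
  have hw3 : p*w = 0 := mul0L hpq0 hw1
  have hw4 : w*q = 0 := mul0R hpq0 hw2
  have hws : p * star w * q = star w := starCorner hsq hsp hw
  have sw1 : p*star w = star w := mulL hpp hws
  have sw2 : star w*q = star w := mulR hqq hws
  have sw3 : q*star w = 0 := mul0L hqp0 sw1
  have sw4 : star w*p = 0 := mul0R hqp0 sw2
  obtain ⟨M, hM⟩ : ∃ M, M = Φ (u+w) - Φ u - Φ w := ⟨_, rfl⟩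
  -- (a) third slot with W = q : kills u
  have hWu : 𝕋 (((1:ℂ)/2) • (1:A)) q u = 0 := by
    rw [T_half, hsq, hu3, hu4, add_zero]
  have k3 : 𝕋 (((1:ℂ)/2) • (1:A)) q M = 0 := by
    have h := key3 hΦ (((1:ℂ)/2) • (1:A)) q u w
    rw [hWu, ← hM] at h
    simpa [phi_zero hΦ] using h
  rw [T_half, hsq] at k3
  have e12 : p * M * q = 0 := by
    have h := congrArg (fun z => p * z * q) k3
    simp only [mul_add, add_mul, mul_assoc, lm hqq, hqq, lm hpq0, hpq0,
      mul_zero, zero_mul, add_zero, zero_add] at h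
    simpa [mul_assoc] using h
  have e21 : q * M * p = 0 := by
    have h := congrArg (fun z => q * z * p) k3
    simp only [mul_add, add_mul, mul_assoc, lm hqq, hqq, lm hqp0, hqp0,
      mul_zero, zero_mul, add_zero, zero_add] at h
    simpa [mul_assoc] using h
  have e22 : q * M * q = 0 := by
    have h := congrArg (fun z => q * z * q) k3
    simp only [mul_add, add_mul, mul_assoc, lm hqq, hqq,
      mul_zero, zero_mul, add_zero, zero_add] at h
    have := cancel_two h
    simpa [mul_assoc] using this
  have hMc : p * M * p = M := by
    have hd := decomp hpq M
    rw [e12, e21, e22] at hd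
    simpa using hd.symm
  have hM1 : p*M = M := mulL hpp hMc
  have hM2 : M*p = M := mulR hpp hMc
  have hM3 : q*M = 0 := mul0L hqp0 hM1
  have hM4 : M*q = 0 := mul0R hpq0 hM2
  have hMs : p * star M * p = star M := starCorner hsp hsp hMc
  have sM1 : p*star M = star M := mulL hpp hMs
  have sM2 : star M*p = star M := mulR hpp hMs
  have sM3 : q*star M = 0 := mul0L hqp0 sM1
  have sM4 : star M*q = 0 := mul0R hpq0 sM2
  -- (b) first slot at (q*x*p, p) : kills w, detects star M
  have hxM : ∀ x : A, q * x * star M = 0 := by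
    intro x
    have hw0 : 𝕋 w (q*x*p) p = 0 := by
      simp [T_ex, mul_assoc, star_mul, hsp, hsq, lm hw4, lm hw3, lm hw2, lm sw4, lm sw3,
        lm hpp, lm hqq, lm hpq0, lm hqp0, hpp, hqq, hpq0, hqp0, sw4, sw3, hw4, hw3]
    have k1 : 𝕋 M (q*x*p) p = 0 := by
      have h := key1 hΦ (q*x*p) p u w
      rw [hw0, ← hM] at h
      simpa [phi_zero hΦ] using h
    have h := congrArg (fun z => q * z * p) k1
    simp only [T_ex, mul_assoc, mul_add, add_mul, star_mul, hsp, hsq,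
      lm hM2, lm hM1, lm sM2, lm sM1, lm hM4,
      lm sM3, lm hM3, lm hpp, lm hqq, lm hpq0, lm hqp0, hpp, hqq, hpq0, hqp0, sM2, sM1, hM4, hM3,
      mul_zero, zero_mul, add_zero, zero_add] at h
    simpa [mul_assoc] using h
  have hsM0 : star M = 0 := (hPr q (star M) hxM).resolve_left hq0
  have hM0 : M = 0 := by
    have := congrArg star hsM0
    simpa using this
  rw [hM] at hM0
  exact sub2_eq hM0


lemma star_I_smul {x : A} : star (Complex.I • x) = (-Complex.I) • star x := by
  rw [star_smul]
  congr 1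
  simp [Complex.star_def]

/-- Triple: u1 ∈ A11, u2 ∈ A12, u3 ∈ A21. -/
lemma triple (hΦ : Hphi Φ) (hPr : Hpr A) (hP : PQ p q) {u1 u2 u3 : A}
    (h1 : p * u1 * p = u1) (h2 : p * u2 * q = u2) (h3 : q * u3 * p = u3) :
    Φ (u1 + u2 + u3) = Φ u1 + Φ u2 + Φ u3 := by
  obtain ⟨hpq, hsp, hsq, hpp, hqq, hpq0, hqp0, hp0, hq0⟩ := hP
  have h11 : p*u1 = u1 := mulL hpp h1
  have h12 : u1*p = u1 := mulR hpp h1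
  have h13 : q*u1 = 0 := mul0L hqp0 h11
  have h14 : u1*q = 0 := mul0R hpq0 h12
  have h1s : p * star u1 * p = star u1 := starCorner hsp hsp h1
  have s11 : p*star u1 = star u1 := mulL hpp h1s
  have s12 : star u1*p = star u1 := mulR hpp h1s
  have s13 : q*star u1 = 0 := mul0L hqp0 s11
  have s14 : star u1*q = 0 := mul0R hpq0 s12
  have h21 : p*u2 = u2 := mulL hpp h2
  have h22 : u2*q = u2 := mulR hqq h2
  have h23 : q*u2 = 0 := mul0L hqp0 h21
  have h24 : u2*p = 0 := mul0R hqp0 h22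
  have h2s : q * star u2 * p = star u2 := starCorner hsp hsq h2
  have s21 : q*star u2 = star u2 := mulL hqq h2s
  have s22 : star u2*p = star u2 := mulR hpp h2s
  have s23 : p*star u2 = 0 := mul0L hpq0 s21
  have s24 : star u2*q = 0 := mul0R hpq0 s22
  have h31 : q*u3 = u3 := mulL hqq h3
  have h32 : u3*p = u3 := mulR hpp h3
  have h33 : p*u3 = 0 := mul0L hpq0 h31
  have h34 : u3*q = 0 := mul0R hpq0 h32
  have h3s : p * star u3 * q = star u3 := starCorner hsq hsp h3
  have s31 : p*star u3 = star u3 := mulL hpp h3s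
  have s32 : star u3*q = star u3 := mulR hqq h3s
  have s33 : q*star u3 = 0 := mul0L hqp0 s31
  have s34 : star u3*p = 0 := mul0R hqp0 s32
  obtain ⟨M, hM⟩ : ∃ M, M = Φ (u1+u2+u3) - Φ u1 - Φ u2 - Φ u3 := ⟨_, rfl⟩
  have half := (((1:ℂ)/2) • (1:A))
  -- (a) third slot with W = I • p
  have hW1 : 𝕋 (((1:ℂ)/2) • (1:A)) (Complex.I • p) u1 = 0 := by
    rw [T_half, star_I_smul, hsp, smul_mul_assoc, mul_smul_comm, h11, h12]
    module
  have hW2 : 𝕋 (((1:ℂ)/2) • (1:A)) (Complex.I • p) u2 = Complex.I • u2 := by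
    rw [T_half, star_I_smul, hsp, smul_mul_assoc, mul_smul_comm, h21, h24]
    module
  have hW3 : 𝕋 (((1:ℂ)/2) • (1:A)) (Complex.I • p) u3 = (-Complex.I) • u3 := by
    rw [T_half, star_I_smul, hsp, smul_mul_assoc, mul_smul_comm, h33, h32]
    module
  have kD2a : 𝕋 (((1:ℂ)/2) • (1:A)) (Complex.I • p) (Φ (u1+u2) - Φ u1 - Φ u2) = 0 := by
    have h := key3 hΦ (((1:ℂ)/2) • (1:A)) (Complex.I • p) u1 u2
    rw [hW1, hW2] at h
    simpa [phi_zero hΦ] using h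
  have kD1a : 𝕋 (((1:ℂ)/2) • (1:A)) (Complex.I • p) (Φ (u1+u2+u3) - Φ (u1+u2) - Φ u3) = 0 := by
    have h := key3 hΦ (((1:ℂ)/2) • (1:A)) (Complex.I • p) (u1+u2) u3
    rw [T_add3, hW1, hW2, hW3, zero_add] at h
    have hsplit : Φ (Complex.I • u2 + (-Complex.I) • u3)
        = Φ (Complex.I • u2) + Φ ((-Complex.I) • u3) := by
      refine claim2 hΦ ⟨hpq, hsp, hsq, hpp, hqq, hpq0, hqp0, hp0, hq0⟩ ?_ ?_
      · simp only [mul_smul_comm, smul_mul_assoc, h2]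
      · simp only [mul_smul_comm, smul_mul_assoc, h3]
    rw [hsplit] at h
    rw [h]; abel
  have ka : 𝕋 (((1:ℂ)/2) • (1:A)) (Complex.I • p) M = 0 := by
    have hsum : M = (Φ (u1+u2+u3) - Φ (u1+u2) - Φ u3) + (Φ (u1+u2) - Φ u1 - Φ u2) := by
      rw [hM]; abel
    rw [hsum, T_add3, kD1a, kD2a, add_zero]
  rw [T_half, star_I_smul, hsp, smul_mul_assoc, mul_smul_comm] at ka
  have hcomm : p * M = M * p := by
    have h : Complex.I • (p * M - M * p) = 0 := by
      rw [smul_sub, sub_eq_add_neg]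
      simpa [neg_smul] using ka
    have := cancel_smul Complex.I_ne_zero h
    rw [← sub_eq_zero]; exact this
  have e12 : p * M * q = 0 := by
    rw [hcomm, mul_assoc, hpq0, mul_zero]
  have e21 : q * M * p = 0 := by
    rw [mul_assoc, ← hcomm, ← mul_assoc, hqp0, zero_mul]
  -- (b) third slot with W = q
  have hV1 : 𝕋 (((1:ℂ)/2) • (1:A)) q u1 = 0 := by
    rw [T_half, hsq, h13, h14, add_zero]
  have hV2 : 𝕋 (((1:ℂ)/2) • (1:A)) q u2 = u2 := by
    rw [T_half, hsq, h23, h22, zero_add]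
  have hV3 : 𝕋 (((1:ℂ)/2) • (1:A)) q u3 = u3 := by
    rw [T_half, hsq, h31, h34, add_zero]
  have kD2b : 𝕋 (((1:ℂ)/2) • (1:A)) q (Φ (u1+u2) - Φ u1 - Φ u2) = 0 := by
    have h := key3 hΦ (((1:ℂ)/2) • (1:A)) q u1 u2
    rw [hV1, hV2] at h
    simpa [phi_zero hΦ] using h
  have kD1b : 𝕋 (((1:ℂ)/2) • (1:A)) q (Φ (u1+u2+u3) - Φ (u1+u2) - Φ u3) = 0 := by
    have h := key3 hΦ (((1:ℂ)/2) • (1:A)) q (u1+u2) u3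
    rw [T_add3, hV1, hV2, hV3, zero_add] at h
    rw [claim2 hΦ ⟨hpq, hsp, hsq, hpp, hqq, hpq0, hqp0, hp0, hq0⟩ h2 h3] at h
    rw [h]; abel
  have kb : 𝕋 (((1:ℂ)/2) • (1:A)) q M = 0 := by
    have hsum : M = (Φ (u1+u2+u3) - Φ (u1+u2) - Φ u3) + (Φ (u1+u2) - Φ u1 - Φ u2) := by
      rw [hM]; abel
    rw [hsum, T_add3, kD1b, kD2b, add_zero]
  rw [T_half, hsq] at kb
  have e22 : q * M * q = 0 := by
    have h := congrArg (fun z => q * z * q) kb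
    simp only [mul_add, add_mul, mul_assoc, lm hqq, hqq,
      mul_zero, zero_mul, add_zero, zero_add] at h
    have := cancel_two h
    simpa [mul_assoc] using this
  have hMc : p * M * p = M := by
    have hd := decomp hpq M
    rw [e12, e21, e22] at hd
    simpa using hd.symm
  have hM1 : p*M = M := mulL hpp hMc
  have hM2 : M*p = M := mulR hpp hMc
  have hM3 : q*M = 0 := mul0L hqp0 hM1
  have hM4 : M*q = 0 := mul0R hpq0 hM2
  have hMs : p * star M * p = star M := starCorner hsp hsp hMc
  have sM1 : p*star M = star M := mulL hpp hMs
  have sM2 : star M*p = star M := mulR hpp hMs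
  have sM3 : q*star M = 0 := mul0L hqp0 sM1
  have sM4 : star M*q = 0 := mul0R hpq0 sM2
  -- (c) middle slot at (q*x*p, p)
  have hxM : ∀ x : A, q * x * M = 0 := by
    intro x
    have hz2 : 𝕋 (q*x*p) u2 p = 0 := by
      simp [T_ex, mul_assoc, mul_add, add_mul, star_mul, hsp, hsq,
        lm h21, lm h24, lm h23, lm h22, lm s21, lm s22, lm s23, lm s24,
        lm hpp, lm hqq, lm hpq0, lm hqp0, hpp, hqq, hpq0, hqp0,
        h21, h24, h23, h22, s21, s22, s23, s24]
    have hz3 : 𝕋 (q*x*p) u3 p = 0 := by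
      simp [T_ex, mul_assoc, mul_add, add_mul, star_mul, hsp, hsq,
        lm h31, lm h32, lm h33, lm h34, lm s31, lm s32, lm s33, lm s34,
        lm hpp, lm hqq, lm hpq0, lm hqp0, hpp, hqq, hpq0, hqp0,
        h31, h32, h33, h34, s31, s32, s33, s34]
    have kD2c : 𝕋 (q*x*p) (Φ (u1+u2) - Φ u1 - Φ u2) p = 0 := by
      have h := key2 hΦ (q*x*p) p u1 u2
      rw [hz2] at h
      simpa [phi_zero hΦ] using h
    have kD1c : 𝕋 (q*x*p) (Φ (u1+u2+u3) - Φ (u1+u2) - Φ u3) p = 0 := by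
      have h := key2 hΦ (q*x*p) p (u1+u2) u3
      rw [T_add2, hz2, hz3, add_zero] at h
      simpa [phi_zero hΦ] using h
    have kc : 𝕋 (q*x*p) M p = 0 := by
      have hsum : M = (Φ (u1+u2+u3) - Φ (u1+u2) - Φ u3) + (Φ (u1+u2) - Φ u1 - Φ u2) := by
        rw [hM]; abel
      rw [hsum, T_add2, kD1c, kD2c, add_zero]
    have h := congrArg (fun z => q * z * p) kc
    simp only [T_ex, mul_assoc, mul_add, add_mul, star_mul, hsp, hsq,
      lm hM1, lm hM2, lm hM3, lm hM4, lm sM1, lm sM2, lm sM3, lm sM4,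
      lm hpp, lm hqq, lm hpq0, lm hqp0, hpp, hqq, hpq0, hqp0,
      hM1, hM2, hM3, hM4, sM1, sM2, sM3, sM4,
      mul_zero, zero_mul, add_zero, zero_add] at h
    simpa [mul_assoc] using h
  have hM0 : M = 0 := (hPr q M hxM).resolve_left hq0
  rw [hM] at hM0
  exact sub3_eq hM0


/-- Quadruple: one element from each Peirce corner. -/
lemma quad (hΦ : Hphi Φ) (hPr : Hpr A) (hP : PQ p q) {u1 u2 u3 u4 : A}
    (h1 : p * u1 * p = u1) (h2 : p * u2 * q = u2) (h3 : q * u3 * p = u3)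
    (h4 : q * u4 * q = u4) :
    Φ (u1 + u2 + u3 + u4) = Φ u1 + Φ u2 + Φ u3 + Φ u4 := by
  obtain ⟨hpq, hsp, hsq, hpp, hqq, hpq0, hqp0, hp0, hq0⟩ := hP
  have hPQ : PQ p q := ⟨hpq, hsp, hsq, hpp, hqq, hpq0, hqp0, hp0, hq0⟩
  have h11 : p*u1 = u1 := mulL hpp h1
  have h12 : u1*p = u1 := mulR hpp h1
  have h13 : q*u1 = 0 := mul0L hqp0 h11
  have h14 : u1*q = 0 := mul0R hpq0 h12
  have h21 : p*u2 = u2 := mulL hpp h2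
  have h22 : u2*q = u2 := mulR hqq h2
  have h23 : q*u2 = 0 := mul0L hqp0 h21
  have h24 : u2*p = 0 := mul0R hqp0 h22
  have h31 : q*u3 = u3 := mulL hqq h3
  have h32 : u3*p = u3 := mulR hpp h3
  have h33 : p*u3 = 0 := mul0L hpq0 h31
  have h34 : u3*q = 0 := mul0R hpq0 h32
  have h41 : q*u4 = u4 := mulL hqq h4
  have h42 : u4*q = u4 := mulR hqq h4
  have h43 : p*u4 = 0 := mul0L hpq0 h41
  have h44 : u4*p = 0 := mul0R hqp0 h42
  obtain ⟨M, hM⟩ : ∃ M, M = Φ (u1+u2+u3+u4) - Φ u1 - Φ u2 - Φ u3 - Φ u4 := ⟨_, rfl⟩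
  -- chain decomposition
  have hsum : M = (Φ (u1+u2+u3+u4) - Φ (u1+u2+u3) - Φ u4)
      + (Φ (u1+u2+u3) - Φ (u1+u2) - Φ u3)
      + (Φ (u1+u2) - Φ u1 - Φ u2) := by rw [hM]; abel
  -- (a) third slot with W = I•p
  have hW1 : 𝕋 (((1:ℂ)/2) • (1:A)) (Complex.I • p) u1 = 0 := by
    rw [T_half, star_I_smul, hsp, smul_mul_assoc, mul_smul_comm, h11, h12]
    module
  have hW2 : 𝕋 (((1:ℂ)/2) • (1:A)) (Complex.I • p) u2 = Complex.I • u2 := by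
    rw [T_half, star_I_smul, hsp, smul_mul_assoc, mul_smul_comm, h21, h24]
    module
  have hW3 : 𝕋 (((1:ℂ)/2) • (1:A)) (Complex.I • p) u3 = (-Complex.I) • u3 := by
    rw [T_half, star_I_smul, hsp, smul_mul_assoc, mul_smul_comm, h33, h32]
    module
  have hW4 : 𝕋 (((1:ℂ)/2) • (1:A)) (Complex.I • p) u4 = 0 := by
    rw [T_half, star_I_smul, hsp, smul_mul_assoc, mul_smul_comm, h43, h44]
    module
  have kD3a : 𝕋 (((1:ℂ)/2) • (1:A)) (Complex.I • p) (Φ (u1+u2) - Φ u1 - Φ u2) = 0 := by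
    have h := key3 hΦ (((1:ℂ)/2) • (1:A)) (Complex.I • p) u1 u2
    rw [hW1, hW2] at h
    simpa [phi_zero hΦ] using h
  have kD2a : 𝕋 (((1:ℂ)/2) • (1:A)) (Complex.I • p) (Φ (u1+u2+u3) - Φ (u1+u2) - Φ u3) = 0 := by
    have h := key3 hΦ (((1:ℂ)/2) • (1:A)) (Complex.I • p) (u1+u2) u3
    rw [T_add3, hW1, hW2, hW3, zero_add] at h
    have hsplit : Φ (Complex.I • u2 + (-Complex.I) • u3)
        = Φ (Complex.I • u2) + Φ ((-Complex.I) • u3) := by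
      refine claim2 hΦ hPQ ?_ ?_
      · simp only [mul_smul_comm, smul_mul_assoc, h2]
      · simp only [mul_smul_comm, smul_mul_assoc, h3]
    rw [hsplit] at h
    rw [h]; abel
  have kD1a : 𝕋 (((1:ℂ)/2) • (1:A)) (Complex.I • p)
      (Φ (u1+u2+u3+u4) - Φ (u1+u2+u3) - Φ u4) = 0 := by
    have h := key3 hΦ (((1:ℂ)/2) • (1:A)) (Complex.I • p) (u1+u2+u3) u4
    rw [T_add3, T_add3, hW1, hW2, hW3, hW4, zero_add] at h
    simpa [phi_zero hΦ] using h
  have ka : 𝕋 (((1:ℂ)/2) • (1:A)) (Complex.I • p) M = 0 := by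
    rw [hsum, T_add3, T_add3, kD1a, kD2a, kD3a, add_zero, add_zero]
  rw [T_half, star_I_smul, hsp, smul_mul_assoc, mul_smul_comm] at ka
  have hcomm : p * M = M * p := by
    have h : Complex.I • (p * M - M * p) = 0 := by
      rw [smul_sub, sub_eq_add_neg]
      simpa [neg_smul] using ka
    have := cancel_smul Complex.I_ne_zero h
    rw [← sub_eq_zero]; exact this
  have e12 : p * M * q = 0 := by
    rw [hcomm, mul_assoc, hpq0, mul_zero]
  have e21 : q * M * p = 0 := by
    rw [mul_assoc, ← hcomm, ← mul_assoc, hqp0, zero_mul]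
  -- (b) third slot with W = p
  have hU1 : 𝕋 (((1:ℂ)/2) • (1:A)) p u1 = u1 + u1 := by
    rw [T_half, hsp, h11, h12]
  have hU2 : 𝕋 (((1:ℂ)/2) • (1:A)) p u2 = u2 := by
    rw [T_half, hsp, h21, h24, add_zero]
  have hU3 : 𝕋 (((1:ℂ)/2) • (1:A)) p u3 = u3 := by
    rw [T_half, hsp, h33, h32, zero_add]
  have hU4 : 𝕋 (((1:ℂ)/2) • (1:A)) p u4 = 0 := by
    rw [T_half, hsp, h43, h44, add_zero]
  have hc11 : p * (u1 + u1) * p = u1 + u1 := by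
    simp only [mul_add, add_mul, h1]
  have kD3b : 𝕋 (((1:ℂ)/2) • (1:A)) p (Φ (u1+u2) - Φ u1 - Φ u2) = 0 := by
    have h := key3 hΦ (((1:ℂ)/2) • (1:A)) p u1 u2
    rw [hU1, hU2] at h
    rw [pair_11_12 hΦ hPr hPQ hc11 h2] at h
    rw [h]; abel
  have kD2b : 𝕋 (((1:ℂ)/2) • (1:A)) p (Φ (u1+u2+u3) - Φ (u1+u2) - Φ u3) = 0 := by
    have h := key3 hΦ (((1:ℂ)/2) • (1:A)) p (u1+u2) u3
    rw [T_add3, hU1, hU2, hU3] at h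
    rw [triple hΦ hPr hPQ hc11 h2 h3, pair_11_12 hΦ hPr hPQ hc11 h2] at h
    rw [h]; abel
  have kD1b : 𝕋 (((1:ℂ)/2) • (1:A)) p
      (Φ (u1+u2+u3+u4) - Φ (u1+u2+u3) - Φ u4) = 0 := by
    have h := key3 hΦ (((1:ℂ)/2) • (1:A)) p (u1+u2+u3) u4
    rw [T_add3, T_add3, hU1, hU2, hU3, hU4] at h
    simpa [phi_zero hΦ] using h
  have kb : 𝕋 (((1:ℂ)/2) • (1:A)) p M = 0 := by
    rw [hsum, T_add3, T_add3, kD1b, kD2b, kD3b, add_zero, add_zero]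
  rw [T_half, hsp] at kb
  have e11 : p * M * p = 0 := by
    have h := congrArg (fun z => p * z * p) kb
    simp only [mul_add, add_mul, mul_assoc, lm hpp, hpp,
      mul_zero, zero_mul, add_zero, zero_add] at h
    have := cancel_two h
    simpa [mul_assoc] using this
  -- (c) third slot with W = q
  have hV1 : 𝕋 (((1:ℂ)/2) • (1:A)) q u1 = 0 := by
    rw [T_half, hsq, h13, h14, add_zero]
  have hV2 : 𝕋 (((1:ℂ)/2) • (1:A)) q u2 = u2 := by
    rw [T_half, hsq, h23, h22, zero_add]
  have hV3 : 𝕋 (((1:ℂ)/2) • (1:A)) q u3 = u3 := by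
    rw [T_half, hsq, h31, h34, add_zero]
  have hV4 : 𝕋 (((1:ℂ)/2) • (1:A)) q u4 = u4 + u4 := by
    rw [T_half, hsq, h41, h42]
  have hc44 : q * (u4 + u4) * q = u4 + u4 := by
    simp only [mul_add, add_mul, h4]
  have kD3c : 𝕋 (((1:ℂ)/2) • (1:A)) q (Φ (u1+u2) - Φ u1 - Φ u2) = 0 := by
    have h := key3 hΦ (((1:ℂ)/2) • (1:A)) q u1 u2
    rw [hV1, hV2] at h
    simpa [phi_zero hΦ] using h
  have kD2c : 𝕋 (((1:ℂ)/2) • (1:A)) q (Φ (u1+u2+u3) - Φ (u1+u2) - Φ u3) = 0 := by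
    have h := key3 hΦ (((1:ℂ)/2) • (1:A)) q (u1+u2) u3
    rw [T_add3, hV1, hV2, hV3, zero_add] at h
    rw [claim2 hΦ hPQ h2 h3] at h
    rw [h]; abel
  have kD1c : 𝕋 (((1:ℂ)/2) • (1:A)) q
      (Φ (u1+u2+u3+u4) - Φ (u1+u2+u3) - Φ u4) = 0 := by
    have h := key3 hΦ (((1:ℂ)/2) • (1:A)) q (u1+u2+u3) u4
    rw [T_add3, T_add3, hV1, hV2, hV3, hV4, zero_add] at h
    have hre : u2 + u3 + (u4 + u4) = u4 + u4 + u3 + u2 := by abel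
    rw [hre] at h
    rw [triple hΦ hPr hPQ.symm hc44 h3 h2] at h
    rw [claim2 hΦ hPQ h2 h3] at h
    rw [h]; abel
  have kc : 𝕋 (((1:ℂ)/2) • (1:A)) q M = 0 := by
    rw [hsum, T_add3, T_add3, kD1c, kD2c, kD3c, add_zero, add_zero]
  rw [T_half, hsq] at kc
  have e22 : q * M * q = 0 := by
    have h := congrArg (fun z => q * z * q) kc
    simp only [mul_add, add_mul, mul_assoc, lm hqq, hqq,
      mul_zero, zero_mul, add_zero, zero_add] at h
    have := cancel_two h
    simpa [mul_assoc] using this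
  have hM0 : M = 0 := by
    have hd := decomp hpq M
    rw [e11, e12, e21, e22] at hd
    simpa using hd
  rw [hM] at hM0
  exact sub4_eq hM0


/-- The diamond identity: for u,v ∈ A12,
`(Φ(u+v)-Φu-Φv) + (Φ(u*+v*)-Φu*-Φv*) = 0`. -/
lemma diamond (hΦ : Hphi Φ) (hPr : Hpr A) (hP : PQ p q) {u v : A}
    (hu : p * u * q = u) (hv : p * v * q = v) :
    (Φ (u+v) - Φ u - Φ v) + (Φ (star u + star v) - Φ (star u) - Φ (star v)) = 0 := by
  obtain ⟨hpq, hsp, hsq, hpp, hqq, hpq0, hqp0, hp0, hq0⟩ := hP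
  have hPQ : PQ p q := ⟨hpq, hsp, hsq, hpp, hqq, hpq0, hqp0, hp0, hq0⟩
  have hu1 : p*u = u := mulL hpp hu
  have hu2 : u*q = u := mulR hqq hu
  have hu3 : q*u = 0 := mul0L hqp0 hu1
  have hu4 : u*p = 0 := mul0R hqp0 hu2
  have hus : q * star u * p = star u := starCorner hsp hsq hu
  have su1 : q*star u = star u := mulL hqq hus
  have su2 : star u*p = star u := mulR hpp hus
  have su3 : p*star u = 0 := mul0L hpq0 su1
  have su4 : star u*q = 0 := mul0R hpq0 su2
  have hv1 : p*v = v := mulL hpp hv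
  have hv2 : v*q = v := mulR hqq hv
  have hv3 : q*v = 0 := mul0L hqp0 hv1
  have hv4 : v*p = 0 := mul0R hqp0 hv2
  have hvs : q * star v * p = star v := starCorner hsp hsq hv
  have sv1 : q*star v = star v := mulL hqq hvs
  have sv2 : star v*p = star v := mulR hpp hvs
  have sv3 : p*star v = 0 := mul0L hpq0 sv1
  have sv4 : star v*q = 0 := mul0R hpq0 sv2
  -- values
  have hvu : v * u = 0 := by rw [← hu1, ← mul_assoc, hv4, zero_mul]
  have hsvu : star u * star v = 0 := by rw [← star_mul, hvu, star_zero]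
  have vpuq : 𝕋 p u q = u + star u := by
    simp [T_ex, mul_assoc, hsp, hsq, hu1, hu2, hu3, hu4, su1, su2, su3, su4,
      lm hu1, lm hu2, lm hu3, lm hu4, lm su1, lm su2, lm su3, lm su4,
      lm hpp, lm hqq, lm hpq0, lm hqp0, hpp, hqq, hpq0, hqp0]
  have vpqq : 𝕋 p q q = 0 := by
    simp [T_ex, mul_assoc, hsp, hsq, lm hpp, lm hqq, lm hpq0, lm hqp0, hpp, hqq, hpq0, hqp0]
  have vvuq : 𝕋 v u q = 0 := by
    simp [T_ex, mul_assoc, hsp, hsq, hvu, hsvu, lm hvu, lm hsvu,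
      hu1, hu2, hu3, hu4, su1, su2, su3, su4,
      lm hu1, lm hu2, lm hu3, lm hu4, lm su1, lm su2, lm su3, lm su4,
      hv1, hv2, hv3, hv4, sv1, sv2, sv3, sv4,
      lm hv1, lm hv2, lm hv3, lm hv4, lm sv1, lm sv2, lm sv3, lm sv4,
      lm hpp, lm hqq, lm hpq0, lm hqp0, hpp, hqq, hpq0, hqp0]
  have vvqq : 𝕋 v q q = v + star v := by
    simp [T_ex, mul_assoc, hsp, hsq, hv1, hv2, hv3, hv4, sv1, sv2, sv3, sv4,
      lm hv1, lm hv2, lm hv3, lm hv4, lm sv1, lm sv2, lm sv3, lm sv4,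
      lm hpp, lm hqq, lm hpq0, lm hqp0, hpp, hqq, hpq0, hqp0]
  -- the big identity T (p+v) (u+q) q = (u+v) + (star u + star v)
  have Tid : 𝕋 (p + v) (u + q) q = u + v + (star u + star v) := by
    rw [T_add1, T_add2, T_add2, vpuq, vpqq, vvuq, vvqq]
    abel
  have E := hΦ (p+v) (u+q) q
  rw [Tid] at E
  have h1 : Φ (p + v) = Φ p + Φ v := by
    refine pair_11_12 hΦ hPr hPQ ?_ hv
    rw [hpp, hpp]
  have h2 : Φ (u + q) = Φ u + Φ q := by
    have h := pair_11_21 hΦ hPr hPQ.symm (by rw [hqq, hqq]) hu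
    rw [add_comm q u, add_comm (Φ q) (Φ u)] at h
    exact h
  rw [h1, h2] at E
  have R : 𝕋 (Φ p) u q + 𝕋 p (Φ u) q + 𝕋 p u (Φ q)
      + (𝕋 (Φ p) q q + 𝕋 p (Φ q) q + 𝕋 p q (Φ q))
      + (𝕋 (Φ v) u q + 𝕋 v (Φ u) q + 𝕋 v u (Φ q))
      + (𝕋 (Φ v) q q + 𝕋 v (Φ q) q + 𝕋 v q (Φ q))
      = Φ (𝕋 p u q) + Φ (𝕋 p q q) + Φ (𝕋 v u q) + Φ (𝕋 v q q) := by
    rw [hΦ p u q, hΦ p q q, hΦ v u q, hΦ v q q]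
  have E' : Φ (u + v + (star u + star v))
      = Φ (𝕋 p u q) + Φ (𝕋 p q q) + Φ (𝕋 v u q) + Φ (𝕋 v q q) := by
    rw [E, ← R]
    simp only [T_add1, T_add2]
    abel
  rw [vpuq, vpqq, vvuq, vvqq, phi_zero hΦ] at E'
  have huv : p * (u + v) * q = u + v := by
    simp only [mul_add, add_mul, hu, hv]
  have hsuv : q * (star u + star v) * p = star u + star v := by
    simp only [mul_add, add_mul, hus, hvs]
  rw [claim2 hΦ hPQ huv hsuv] at E'
  rw [claim2 hΦ hPQ hu hus, claim2 hΦ hPQ hv hvs] at E'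
  have g : (Φ (u+v) - Φ u - Φ v) + (Φ (star u + star v) - Φ (star u) - Φ (star v))
      = (Φ (u+v) + Φ (star u + star v))
        - ((Φ u + Φ (star u)) + 0 + (Φ v + Φ (star v)) + 0) := by abel
  rw [g, E']
  abel

/-- Additivity on the corner A12. -/
lemma add12 (hΦ : Hphi Φ) (hPr : Hpr A) (hP : PQ p q) {u v : A}
    (hu : p * u * q = u) (hv : p * v * q = v) : Φ (u + v) = Φ u + Φ v := by
  have hus : q * star u * p = star u := starCorner hP.sp hP.sq hu
  have hvs : q * star v * p = star v := starCorner hP.sp hP.sq hv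
  have hMc := cs12 hΦ hP hu hv
  have hNc := cs12 hΦ hP.symm hus hvs
  have hd := diamond hΦ hPr hP hu hv
  have hMN : Φ (u+v) - Φ u - Φ v = -(Φ (star u + star v) - Φ (star u) - Φ (star v)) := by
    rw [← sub_eq_zero]
    rw [sub_neg_eq_add]
    exact hd
  have hM0 : Φ (u+v) - Φ u - Φ v = 0 := by
    rw [← hMc, hMN, ← hNc]
    simp [mul_assoc, lm hP.pq, hP.pq]
  exact sub2_eq hM0

/-- Additivity on the corner A21. -/
lemma add21 (hΦ : Hphi Φ) (hPr : Hpr A) (hP : PQ p q) {u v : A}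
    (hu : q * u * p = u) (hv : q * v * p = v) : Φ (u + v) = Φ u + Φ v := by
  have hsu : p * star u * q = star u := starCorner hP.sq hP.sp hu
  have hsv : p * star v * q = star v := starCorner hP.sq hP.sp hv
  have hd := diamond hΦ hPr hP hsu hsv
  simp only [star_star] at hd
  have hMc := cs12 hΦ hP hsu hsv
  have hNc : q * (Φ (u+v) - Φ u - Φ v) * p = Φ (u+v) - Φ u - Φ v :=
    cs12 hΦ hP.symm hu hv
  have hNM : Φ (u+v) - Φ u - Φ v
      = -(Φ (star u + star v) - Φ (star u) - Φ (star v)) := by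
    rw [← sub_eq_zero, sub_neg_eq_add, add_comm]
    exact hd
  have hN0 : Φ (u+v) - Φ u - Φ v = 0 := by
    rw [← hNc, hNM, ← hMc]
    simp [mul_assoc, lm hP.qp, hP.qp]
  exact sub2_eq hN0


/-- Additivity on the corner A11. -/
lemma add11 (hΦ : Hphi Φ) (hPr : Hpr A) (hP : PQ p q) {u v : A}
    (hu : p * u * p = u) (hv : p * v * p = v) : Φ (u + v) = Φ u + Φ v := by
  obtain ⟨hpq, hsp, hsq, hpp, hqq, hpq0, hqp0, hp0, hq0⟩ := hP
  have hPQ : PQ p q := ⟨hpq, hsp, hsq, hpp, hqq, hpq0, hqp0, hp0, hq0⟩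
  have hu1 : p*u = u := mulL hpp hu
  have hu2 : u*p = u := mulR hpp hu
  have hu3 : q*u = 0 := mul0L hqp0 hu1
  have hu4 : u*q = 0 := mul0R hpq0 hu2
  have hus : p * star u * p = star u := starCorner hsp hsp hu
  have su1 : p*star u = star u := mulL hpp hus
  have su2 : star u*p = star u := mulR hpp hus
  have su3 : q*star u = 0 := mul0L hqp0 su1
  have su4 : star u*q = 0 := mul0R hpq0 su2
  have hv1 : p*v = v := mulL hpp hv
  have hv2 : v*p = v := mulR hpp hv
  have hv3 : q*v = 0 := mul0L hqp0 hv1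
  have hv4 : v*q = 0 := mul0R hpq0 hv2
  have hvs : p * star v * p = star v := starCorner hsp hsp hv
  have sv1 : p*star v = star v := mulL hpp hvs
  have sv2 : star v*p = star v := mulR hpp hvs
  have sv3 : q*star v = 0 := mul0L hqp0 sv1
  have sv4 : star v*q = 0 := mul0R hpq0 sv2
  obtain ⟨M, hM⟩ : ∃ M, M = Φ (u+v) - Φ u - Φ v := ⟨_, rfl⟩
  -- (a) third slot with W = q kills both
  have hWu : 𝕋 (((1:ℂ)/2) • (1:A)) q u = 0 := by
    rw [T_half, hsq, hu3, hu4, add_zero]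
  have hWv : 𝕋 (((1:ℂ)/2) • (1:A)) q v = 0 := by
    rw [T_half, hsq, hv3, hv4, add_zero]
  have k3 : 𝕋 (((1:ℂ)/2) • (1:A)) q M = 0 := by
    have h := key3 hΦ (((1:ℂ)/2) • (1:A)) q u v
    rw [hWu, hWv, ← hM] at h
    simpa [phi_zero hΦ] using h
  rw [T_half, hsq] at k3
  have e12 : p * M * q = 0 := by
    have h := congrArg (fun z => p * z * q) k3
    simp only [mul_add, add_mul, mul_assoc, lm hqq, hqq, lm hpq0, hpq0,
      mul_zero, zero_mul, add_zero, zero_add] at h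
    simpa [mul_assoc] using h
  have e21 : q * M * p = 0 := by
    have h := congrArg (fun z => q * z * p) k3
    simp only [mul_add, add_mul, mul_assoc, lm hqq, hqq, lm hqp0, hqp0,
      mul_zero, zero_mul, add_zero, zero_add] at h
    simpa [mul_assoc] using h
  have e22 : q * M * q = 0 := by
    have h := congrArg (fun z => q * z * q) k3
    simp only [mul_add, add_mul, mul_assoc, lm hqq, hqq,
      mul_zero, zero_mul, add_zero, zero_add] at h
    have := cancel_two h
    simpa [mul_assoc] using this
  have hMc : p * M * p = M := by
    have hd := decomp hpq M
    rw [e12, e21, e22] at hd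
    simpa using hd.symm
  have hM1 : p*M = M := mulL hpp hMc
  have hM2 : M*p = M := mulR hpp hMc
  have hM3 : q*M = 0 := mul0L hqp0 hM1
  have hM4 : M*q = 0 := mul0R hpq0 hM2
  have hMs : p * star M * p = star M := starCorner hsp hsp hMc
  have sM1 : p*star M = star M := mulL hpp hMs
  have sM2 : star M*p = star M := mulR hpp hMs
  have sM3 : q*star M = 0 := mul0L hqp0 sM1
  have sM4 : star M*q = 0 := mul0R hpq0 sM2
  -- (b) middle slot at (q*x*p, p)
  have hxM : ∀ x : A, q * x * M = 0 := by
    intro x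
    have vKu : 𝕋 (q*x*p) u p = q*(x*u) + star u*(star x*q) := by
      simp only [T_ex, mul_assoc, mul_add, add_mul, star_mul, hsp, hsq,
        lm hu1, lm hu2, lm hu3, lm hu4, lm su1, lm su2, lm su3, lm su4,
        lm hpp, lm hqq, lm hpq0, lm hqp0, hpp, hqq, hpq0, hqp0,
        hu1, hu2, hu3, hu4, su1, su2, su3, su4,
        mul_zero, zero_mul, add_zero, zero_add]
    have vKv : 𝕋 (q*x*p) v p = q*(x*v) + star v*(star x*q) := by
      simp only [T_ex, mul_assoc, mul_add, add_mul, star_mul, hsp, hsq,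
        lm hv1, lm hv2, lm hv3, lm hv4, lm sv1, lm sv2, lm sv3, lm sv4,
        lm hpp, lm hqq, lm hpq0, lm hqp0, hpp, hqq, hpq0, hqp0,
        hv1, hv2, hv3, hv4, sv1, sv2, sv3, sv4,
        mul_zero, zero_mul, add_zero, zero_add]
    -- corner facts for the K and Z pieces
    have hKu : q * (q*(x*u)) * p = q*(x*u) := by
      simp only [mul_assoc, lm hqq, hqq, lm hu2, hu2]
    have hKv : q * (q*(x*v)) * p = q*(x*v) := by
      simp only [mul_assoc, lm hqq, hqq, lm hv2, hv2]
    have hZu : p * (star u*(star x*q)) * q = star u*(star x*q) := by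
      simp only [mul_assoc, lm su1, lm hqq, hqq]
    have hZv : p * (star v*(star x*q)) * q = star v*(star x*q) := by
      simp only [mul_assoc, lm sv1, lm hqq, hqq]
    have hKsum : q * (q*(x*u) + q*(x*v)) * p = q*(x*u) + q*(x*v) := by
      simp only [mul_add, add_mul, hKu, hKv]
    have hZsum : p * (star u*(star x*q) + star v*(star x*q)) * q
        = star u*(star x*q) + star v*(star x*q) := by
      simp only [mul_add, add_mul, hZu, hZv]
    -- the split
    have hsplit : Φ ((q*(x*u) + star u*(star x*q)) + (q*(x*v) + star v*(star x*q)))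
        = Φ (q*(x*u) + star u*(star x*q)) + Φ (q*(x*v) + star v*(star x*q)) := by
      have hre : (q*(x*u) + star u*(star x*q)) + (q*(x*v) + star v*(star x*q))
          = (q*(x*u) + q*(x*v)) + (star u*(star x*q) + star v*(star x*q)) := by abel
      rw [hre]
      rw [claim2sym hΦ hPQ hKsum hZsum]
      rw [add21 hΦ hPr hPQ hKu hKv, add12 hΦ hPr hPQ hZu hZv]
      rw [claim2sym hΦ hPQ hKu hZu, claim2sym hΦ hPQ hKv hZv]
      abel
    have kc : 𝕋 (q*x*p) M p = 0 := by
      have h := key2 hΦ (q*x*p) p u v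
      rw [vKu, vKv, hsplit, ← hM] at h
      rw [h]; abel
    have h := congrArg (fun z => q * z * p) kc
    simp only [T_ex, mul_assoc, mul_add, add_mul, star_mul, hsp, hsq,
      lm hM1, lm hM2, lm hM3, lm hM4, lm sM1, lm sM2, lm sM3, lm sM4,
      lm hpp, lm hqq, lm hpq0, lm hqp0, hpp, hqq, hpq0, hqp0,
      hM1, hM2, hM3, hM4, sM1, sM2, sM3, sM4,
      mul_zero, zero_mul, add_zero, zero_add] at h
    simpa [mul_assoc] using h
  have hM0 : M = 0 := (hPr q M hxM).resolve_left hq0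
  rw [hM] at hM0
  exact sub2_eq hM0

/-- Full additivity. -/
lemma main (hΦ : Hphi Φ) (hPr : Hpr A) (hP : PQ p q) (a b : A) :
    Φ (a + b) = Φ a + Φ b := by
  obtain ⟨hpq, hsp, hsq, hpp, hqq, hpq0, hqp0, hp0, hq0⟩ := hP
  have hPQ : PQ p q := ⟨hpq, hsp, hsq, hpp, hqq, hpq0, hqp0, hp0, hq0⟩
  have c11 : ∀ m : A, p * (p*m*p) * p = p*m*p := by
    intro m; simp only [mul_assoc, lm hpp, hpp]
  have c12 : ∀ m : A, p * (p*m*q) * q = p*m*q := by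
    intro m; simp only [mul_assoc, lm hpp, hpp, lm hqq, hqq]
  have c21 : ∀ m : A, q * (q*m*p) * p = q*m*p := by
    intro m; simp only [mul_assoc, lm hqq, hqq, lm hpp, hpp]
  have c22 : ∀ m : A, q * (q*m*q) * q = q*m*q := by
    intro m; simp only [mul_assoc, lm hqq, hqq]
  have cadd : ∀ x y e f : A, e * x * f = x → e * y * f = y → e * (x+y) * f = x + y := by
    intro x y e f hx hy
    simp only [mul_add, add_mul, hx, hy]
  have ha := decomp hpq a
  have hb := decomp hpq b
  have hquadA : Φ a = Φ (p*a*p) + Φ (p*a*q) + Φ (q*a*p) + Φ (q*a*q) := by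
    conv_lhs => rw [ha]
    exact quad hΦ hPr hPQ (c11 a) (c12 a) (c21 a) (c22 a)
  have hquadB : Φ b = Φ (p*b*p) + Φ (p*b*q) + Φ (q*b*p) + Φ (q*b*q) := by
    conv_lhs => rw [hb]
    exact quad hΦ hPr hPQ (c11 b) (c12 b) (c21 b) (c22 b)
  have hab : a + b = (p*a*p + p*b*p) + (p*a*q + p*b*q) + (q*a*p + q*b*p)
      + (q*a*q + q*b*q) := by
    nth_rewrite 1 [ha, hb]
    abel
  rw [hab]
  rw [quad hΦ hPr hPQ (cadd _ _ _ _ (c11 a) (c11 b)) (cadd _ _ _ _ (c12 a) (c12 b))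
      (cadd _ _ _ _ (c21 a) (c21 b)) (cadd _ _ _ _ (c22 a) (c22 b))]
  rw [add11 hΦ hPr hPQ (c11 a) (c11 b)]
  rw [add12 hΦ hPr hPQ (c12 a) (c12 b)]
  rw [add21 hΦ hPr hPQ (c21 a) (c21 b)]
  rw [add11 hΦ hPr hPQ.symm (c22 a) (c22 b)]
  rw [hquadA, hquadB]
  abel

end Stmt0Aux

theorem stmt0 {A : Type*} [Ring A] [Algebra ℂ A] [StarRing A] [StarModule ℂ A]
    (hprime : ∀ a b : A, (∀ x : A, a * x * b = 0) → a = 0 ∨ b = 0)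
    (hproj : ∃ P : A, star P = P ∧ P * P = P ∧ P ≠ 0 ∧ P ≠ 1)
    (Φ : A → A)
    (hΦ : ∀ a b c : A, Φ (sJordanTriple a b c) =
      sJordanTriple (Φ a) b c + sJordanTriple a (Φ b) c + sJordanTriple a b (Φ c)) :
    ∀ a b : A, Φ (a + b) = Φ a + Φ b := by
  obtain ⟨P, hsP, hPP, hP0, hP1⟩ := hproj
  have hP : Stmt0Aux.PQ P (1 - P) := by
    refine ⟨by abel, hsP, by rw [star_sub, star_one, hsP], hPP, ?_, ?_, ?_, hP0, ?_⟩
    · simp only [mul_sub, sub_mul, one_mul, mul_one, hPP]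
      abel
    · simp only [mul_sub, mul_one, hPP, sub_self]
    · simp only [sub_mul, one_mul, hPP, sub_self]
    · intro h
      apply hP1
      have := sub_eq_zero.mp h
      exact this.symm
  exact fun a b => Stmt0Aux.main hΦ hprime hP a b
end

section
/- Let 𝒜 be a unital prime ∗-algebra over ℂ with a nontrivial projection P₁, and set P₂ = 1 − P₁. Let Φ: 𝒜 → 𝒜 be a map satisfying Φ(A ⋄ B ⋄ C) = Φ(A) ⋄ B ⋄ C + A ⋄ Φ(B) ⋄ C + A ⋄ B ⋄ Φ(C) for all A, B, C ∈ 𝒜. Then for every A₁₂ ∈ P₁𝒜P₂ and every A₂₁ ∈ P₂𝒜P₁, one has Φ(A₁₂ + A₂₁) = Φ(A₁₂) + Φ(A₂₁). -/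
section aux
variable {A : Type*} [Ring A] [StarRing A]

lemma sJT_add_mid (x a b y : A) :
    sJordanTriple x (a + b) y = sJordanTriple x a y + sJordanTriple x b y := by
  simp only [sJordanTriple, sJordan, star_add, star_mul, star_star]
  noncomm_ring

lemma sJT_neg_mid (x a y : A) :
    sJordanTriple x (-a) y = -sJordanTriple x a y := by
  simp only [sJordanTriple, sJordan, mul_neg, neg_mul, star_neg, star_add, star_mul, star_star,
    neg_add, neg_neg]
  noncomm_ring

lemma sJT_sub_mid (x a b y : A) :
    sJordanTriple x (a - b) y = sJordanTriple x a y - sJordanTriple x b y := by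
  rw [sub_eq_add_neg, sJT_add_mid, sJT_neg_mid, sub_eq_add_neg]

lemma key (Φ : A → A)
    (hΦ : ∀ a b c : A, Φ (sJordanTriple a b c) =
      sJordanTriple (Φ a) b c + sJordanTriple a (Φ b) c + sJordanTriple a b (Φ c))
    (h0 : Φ 0 = 0) (u v X Y : A) (hv : sJordanTriple X v Y = 0) :
    sJordanTriple X (Φ (u + v) - Φ u - Φ v) Y = 0 := by
  have h1 := hΦ X (u + v) Y
  have h2 := hΦ X u Y
  have h3 := hΦ X v Y
  rw [sJT_add_mid, hv, add_zero] at h1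
  rw [hv, h0] at h3
  rw [sJT_add_mid, sJT_add_mid] at h1
  have h4 := h1.symm.trans h2
  rw [sJT_sub_mid, sJT_sub_mid]
  linear_combination (norm := abel) h4 + h3
end aux

theorem stmt3 {A : Type*} [Ring A] [Algebra ℂ A] [StarRing A] [StarModule ℂ A]
    (hprime : ∀ a b : A, (∀ x : A, a * x * b = 0) → a = 0 ∨ b = 0)
    (P₁ : A) (hsa : star P₁ = P₁) (hidem : P₁ * P₁ = P₁)
    (hP0 : P₁ ≠ 0) (hP1 : P₁ ≠ 1)
    (Φ : A → A)
    (hΦ : ∀ a b c : A, Φ (sJordanTriple a b c) =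
      sJordanTriple (Φ a) b c + sJordanTriple a (Φ b) c + sJordanTriple a b (Φ c)) :
    ∀ a₁₂ a₂₁ : A, a₁₂ = P₁ * a₁₂ * (1 - P₁) → a₂₁ = (1 - P₁) * a₂₁ * P₁ →
      Φ (a₁₂ + a₂₁) = Φ a₁₂ + Φ a₂₁ := by
  intro a₁₂ a₂₁ h12 h21
  set p := P₁ with hpdef
  set q := (1 : A) - P₁ with hqdef
  have hpq : p * q = 0 := by rw [hqdef, mul_sub, mul_one, hidem, sub_self]
  have hqp : q * p = 0 := by rw [hqdef, sub_mul, one_mul, hidem, sub_self]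
  have hqq : q * q = q := by rw [hqdef]; rw [sub_mul, one_mul, mul_sub, mul_one, hidem]; abel
  have hsq : star q = q := by rw [hqdef, star_sub, star_one, hsa]
  have hpq' : ∀ z : A, p * (q * z) = 0 := fun z => by rw [← mul_assoc, hpq, zero_mul]
  have hqp' : ∀ z : A, q * (p * z) = 0 := fun z => by rw [← mul_assoc, hqp, zero_mul]
  have hpp' : ∀ z : A, p * (p * z) = p * z := fun z => by rw [← mul_assoc, hidem]
  have hqq' : ∀ z : A, q * (q * z) = q * z := fun z => by rw [← mul_assoc, hqq]
  have h0 : Φ 0 = 0 := by have := hΦ 0 0 0; simpa [sJordanTriple, sJordan] using this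
  have hq0 : q ≠ 0 := fun h => hP1 (by rw [hqdef] at h; rw [sub_eq_zero] at h; exact h.symm)
  -- C-conditions
  have C3 : sJordanTriple p a₂₁ q = 0 := by
    simp only [sJordanTriple, sJordan]
    rw [h21]
    simp [star_mul, star_add, hsa, hsq, mul_add, add_mul, mul_assoc, hpq, hqp, hpq', hqp',
      hpp', hqq', hidem, hqq]
  have C4 : sJordanTriple q a₁₂ p = 0 := by
    simp only [sJordanTriple, sJordan]
    rw [h12]
    simp [star_mul, star_add, hsa, hsq, mul_add, add_mul, mul_assoc, hpq, hqp, hpq', hqp',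
      hpp', hqq', hidem, hqq]
  have C5 : ∀ z : A, sJordanTriple (p * z * q) a₂₁ q = 0 := by
    intro z
    simp only [sJordanTriple, sJordan]
    rw [h21]
    simp [star_mul, star_add, hsa, hsq, mul_add, add_mul, mul_assoc, hpq, hqp, hpq', hqp',
      hpp', hqq', hidem, hqq]
  have C6 : ∀ z : A, sJordanTriple (q * z * p) a₁₂ p = 0 := by
    intro z
    simp only [sJordanTriple, sJordan]
    rw [h12]
    simp [star_mul, star_add, hsa, hsq, mul_add, add_mul, mul_assoc, hpq, hqp, hpq', hqp',
      hpp', hqq', hidem, hqq]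
  -- T and E-equations
  set T := Φ (a₁₂ + a₂₁) - Φ a₁₂ - Φ a₂₁ with hT
  have E3 : sJordanTriple p T q = 0 := key Φ hΦ h0 a₁₂ a₂₁ p q C3
  have E4 : sJordanTriple q T p = 0 := by
    have := key Φ hΦ h0 a₂₁ a₁₂ q p C4
    rwa [add_comm a₂₁ a₁₂, sub_right_comm] at this
  have E5 : ∀ z : A, sJordanTriple (p * z * q) T q = 0 :=
    fun z => key Φ hΦ h0 a₁₂ a₂₁ (p * z * q) q (C5 z)
  have E6 : ∀ z : A, sJordanTriple (q * z * p) T p = 0 := by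
    intro z
    have := key Φ hΦ h0 a₂₁ a₁₂ (q * z * p) p (C6 z)
    rwa [add_comm a₂₁ a₁₂, sub_right_comm] at this
  -- extraction
  have F12 : p * (T * q) = 0 := by
    have := congrArg (fun z => p * z * q) E3
    simp only [sJordanTriple, sJordan] at this
    simpa [star_mul, star_add, hsa, hsq, mul_add, add_mul, mul_assoc, hpq, hqp, hpq', hqp',
      hpp', hqq', hidem, hqq] using this
  have F21 : q * (T * p) = 0 := by
    have := congrArg (fun z => q * z * p) E4
    simp only [sJordanTriple, sJordan] at this
    simpa [star_mul, star_add, hsa, hsq, mul_add, add_mul, mul_assoc, hpq, hqp, hpq', hqp',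
      hpp', hqq', hidem, hqq] using this
  have G22 : ∀ z : A, p * z * (q * (T * q)) = 0 := by
    intro z
    have h := congrArg (fun w => p * w * q) (E5 z)
    simp only [sJordanTriple, sJordan] at h
    simp [star_mul, star_add, hsa, hsq, mul_add, add_mul, mul_assoc, hpq, hqp, hpq', hqp',
      hpp', hqq', hidem, hqq] at h
    rw [mul_assoc]
    exact h
  have F22 : q * (T * q) = 0 := (hprime p _ G22).resolve_left hP0
  have G11 : ∀ z : A, q * z * (p * (T * p)) = 0 := by
    intro z
    have h := congrArg (fun w => q * w * p) (E6 z)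
    simp only [sJordanTriple, sJordan] at h
    simp [star_mul, star_add, hsa, hsq, mul_add, add_mul, mul_assoc, hpq, hqp, hpq', hqp',
      hpp', hqq', hidem, hqq] at h
    rw [mul_assoc]
    exact h
  have F11 : p * (T * p) = 0 := (hprime q _ G11).resolve_left hq0
  have hsum : p + q = 1 := by rw [hpdef, hqdef]; abel
  have hT0 : T = 0 := by
    have : (p + q) * (T * (p + q)) = T := by rw [hsum, mul_one, one_mul]
    rw [← this]
    simp [mul_add, add_mul, mul_assoc, F11, F12, F21, F22]
  rw [hT, sub_sub, sub_eq_zero] at hT0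
  exact hT0
end

section
/- Let 𝒜 be a unital prime ∗-algebra over ℂ with a nontrivial projection P₁, and set P₂ = 1 − P₁. Let Φ: 𝒜 → 𝒜 be a map satisfying Φ(A ⋄ B ⋄ C) = Φ(A) ⋄ B ⋄ C + A ⋄ Φ(B) ⋄ C + A ⋄ B ⋄ Φ(C) for all A, B, C ∈ 𝒜. Then for every A₁₁ ∈ P₁𝒜P₁, A₁₂ ∈ P₁𝒜P₂ and A₂₁ ∈ P₂𝒜P₁, one has Φ(A₁₁ + A₁₂ + A₂₁) = Φ(A₁₁) + Φ(A₁₂) + Φ(A₂₁). -/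
lemma sJT_add_left {R : Type*} [Ring R] [StarRing R] (x y b c : R) :
    sJordanTriple (x + y) b c = sJordanTriple x b c + sJordanTriple y b c := by
  simp only [sJordanTriple, sJordan, add_mul, mul_add, star_add, star_mul, star_star]
  abel

lemma sJT_sub_left {R : Type*} [Ring R] [StarRing R] (x y b c : R) :
    sJordanTriple (x - y) b c = sJordanTriple x b c - sJordanTriple y b c := by
  simp only [sJordanTriple, sJordan, sub_mul, mul_sub, add_mul, mul_add, star_add, star_sub,
    star_mul, star_star]
  abel

lemma sJT_add_right {R : Type*} [Ring R] [StarRing R] (a b x y : R) :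
    sJordanTriple a b (x + y) = sJordanTriple a b x + sJordanTriple a b y := by
  simp only [sJordanTriple, sJordan, add_mul, mul_add, star_add, star_mul, star_star]
  abel

lemma sJT_sub_right {R : Type*} [Ring R] [StarRing R] (a b x y : R) :
    sJordanTriple a b (x - y) = sJordanTriple a b x - sJordanTriple a b y := by
  simp only [sJordanTriple, sJordan, sub_mul, mul_sub, add_mul, mul_add, star_add, star_sub,
    star_mul, star_star]
  abel

lemma cornerL {R : Type*} [Ring R] {P Q a : R} (hP : P * P = P) (h : a = P * a * Q) :
    P * a = a := by
  rw [h, ← mul_assoc, ← mul_assoc, hP]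

lemma cornerR {R : Type*} [Ring R] {P Q a : R} (hQ : Q * Q = Q) (h : a = P * a * Q) :
    a * Q = a := by
  rw [h, mul_assoc, hQ]

lemma cornerL0 {R : Type*} [Ring R] {P Q S a : R} (hSP : S * P = 0) (h : a = P * a * Q) :
    S * a = 0 := by
  rw [h, ← mul_assoc, ← mul_assoc, hSP, zero_mul, zero_mul]

lemma cornerR0 {R : Type*} [Ring R] {P Q S a : R} (hQS : Q * S = 0) (h : a = P * a * Q) :
    a * S = 0 := by
  rw [h, mul_assoc, hQS, mul_zero]

lemma starFact {R : Type*} [Ring R] [StarRing R] {u v w : R} (h : u * v = w) :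
    star v * star u = star w := by rw [← star_mul, h]

lemma liftL {R : Type*} [Ring R] {u v w : R} (h : u * v = w) (x : R) :
    u * (v * x) = w * x := by rw [← mul_assoc, h]

lemma phi_zero {R : Type*} [Ring R] [StarRing R] (Φ : R → R)
    (hΦ : ∀ a b c : R, Φ (sJordanTriple a b c) =
      sJordanTriple (Φ a) b c + sJordanTriple a (Φ b) c + sJordanTriple a b (Φ c)) :
    Φ 0 = 0 := by
  have h := hΦ 0 0 0
  simpa [sJordanTriple, sJordan] using h

lemma smul_cancel_int {R : Type*} [AddCommGroup R] [Module ℂ R] {n : ℤ} (hn : n ≠ 0) {x : R}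
    (h : n • x = 0) : x = 0 := by
  have h2 : ((n : ℂ)) • x = 0 := by rw [Int.cast_smul_eq_zsmul]; exact h
  have h3 := congrArg (fun y => ((n : ℂ))⁻¹ • y) h2
  simpa [smul_smul, inv_mul_cancel₀ (show ((n : ℂ)) ≠ 0 by exact_mod_cast hn)] using h3

lemma smul_cancel_nat {R : Type*} [AddCommGroup R] [Module ℂ R] {n : ℕ} (hn : n ≠ 0) {x : R}
    (h : n • x = 0) : x = 0 := by
  have h2 : ((n : ℂ)) • x = 0 := by rw [Nat.cast_smul_eq_nsmul]; exact h
  have h3 := congrArg (fun y => ((n : ℂ))⁻¹ • y) h2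
  simpa [smul_smul, inv_mul_cancel₀ (show ((n : ℂ)) ≠ 0 by exact_mod_cast hn)] using h3

lemma key1 {R : Type*} [Ring R] [StarRing R] (Φ : R → R)
    (hΦ : ∀ a b c : R, Φ (sJordanTriple a b c) =
      sJordanTriple (Φ a) b c + sJordanTriple a (Φ b) c + sJordanTriple a b (Φ c))
    (x y z b c : R) (hx : sJordanTriple x b c = 0) (hy : sJordanTriple y b c = 0) :
    sJordanTriple (Φ (x + y + z)) b c
      = sJordanTriple (Φ x) b c + sJordanTriple (Φ y) b c + sJordanTriple (Φ z) b c := by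
  have h0 := phi_zero Φ hΦ
  have e1 := hΦ (x + y + z) b c
  have e2 := hΦ x b c
  have e3 := hΦ y b c
  have e4 := hΦ z b c
  rw [hx, h0] at e2
  rw [hy, h0] at e3
  have hsum : sJordanTriple (x + y + z) b c = sJordanTriple z b c := by
    rw [sJT_add_left, sJT_add_left, hx, hy, zero_add, zero_add]
  rw [hsum, e4] at e1
  simp only [sJT_add_left] at e1
  set Tm := sJordanTriple (Φ (x + y + z)) b c
  set Tx := sJordanTriple (Φ x) b c
  set Ty := sJordanTriple (Φ y) b c
  set Tz := sJordanTriple (Φ z) b c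
  set Bx := sJordanTriple x (Φ b) c
  set By := sJordanTriple y (Φ b) c
  set Bz := sJordanTriple z (Φ b) c
  set Cx := sJordanTriple x b (Φ c)
  set Cy := sJordanTriple y b (Φ c)
  set Cz := sJordanTriple z b (Φ c)
  calc Tm = (Tz + Bz + Cz) - (Bx + By + Bz) - (Cx + Cy + Cz) := by rw [e1]; abel
    _ = Tx + Ty + Tz - ((Tx + Bx + Cx) + (Ty + By + Cy)) := by abel
    _ = Tx + Ty + Tz - ((0 : R) + 0) := by rw [← e2, ← e3]
    _ = Tx + Ty + Tz := by abel

lemma key3 {R : Type*} [Ring R] [StarRing R] (Φ : R → R)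
    (hΦ : ∀ a b c : R, Φ (sJordanTriple a b c) =
      sJordanTriple (Φ a) b c + sJordanTriple a (Φ b) c + sJordanTriple a b (Φ c))
    (a b x y z : R) (hx : sJordanTriple a b x = 0) (hy : sJordanTriple a b y = 0) :
    sJordanTriple a b (Φ (x + y + z))
      = sJordanTriple a b (Φ x) + sJordanTriple a b (Φ y) + sJordanTriple a b (Φ z) := by
  have h0 := phi_zero Φ hΦ
  have e1 := hΦ a b (x + y + z)
  have e2 := hΦ a b x
  have e3 := hΦ a b y
  have e4 := hΦ a b z
  rw [hx, h0] at e2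
  rw [hy, h0] at e3
  have hsum : sJordanTriple a b (x + y + z) = sJordanTriple a b z := by
    rw [sJT_add_right, sJT_add_right, hx, hy, zero_add, zero_add]
  rw [hsum, e4] at e1
  simp only [sJT_add_right] at e1
  set Tm := sJordanTriple a b (Φ (x + y + z))
  set Tx := sJordanTriple a b (Φ x)
  set Ty := sJordanTriple a b (Φ y)
  set Tz := sJordanTriple a b (Φ z)
  set Ax := sJordanTriple (Φ a) b x
  set Ay := sJordanTriple (Φ a) b y
  set Az := sJordanTriple (Φ a) b z
  set Bx := sJordanTriple a (Φ b) x
  set By := sJordanTriple a (Φ b) y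
  set Bz := sJordanTriple a (Φ b) z
  calc Tm = (Az + Bz + Tz) - (Ax + Ay + Az) - (Bx + By + Bz) := by rw [e1]; abel
    _ = Tx + Ty + Tz - ((Ax + Bx + Tx) + (Ay + By + Ty)) := by abel
    _ = Tx + Ty + Tz - ((0 : R) + 0) := by rw [← e2, ← e3]
    _ = Tx + Ty + Tz := by abel

theorem stmt4 {A : Type*} [Ring A] [Algebra ℂ A] [StarRing A] [StarModule ℂ A]
    (hprime : ∀ a b : A, (∀ x : A, a * x * b = 0) → a = 0 ∨ b = 0)
    (P₁ : A) (hsa : star P₁ = P₁) (hidem : P₁ * P₁ = P₁)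
    (hP0 : P₁ ≠ 0) (hP1 : P₁ ≠ 1)
    (Φ : A → A)
    (hΦ : ∀ a b c : A, Φ (sJordanTriple a b c) =
      sJordanTriple (Φ a) b c + sJordanTriple a (Φ b) c + sJordanTriple a b (Φ c)) :
    ∀ a₁₁ a₁₂ a₂₁ : A, a₁₁ = P₁ * a₁₁ * P₁ → a₁₂ = P₁ * a₁₂ * (1 - P₁) →
      a₂₁ = (1 - P₁) * a₂₁ * P₁ →
      Φ (a₁₁ + a₁₂ + a₂₁) = Φ a₁₁ + Φ a₁₂ + Φ a₂₁ := by
  intro a₁₁ a₁₂ a₂₁ h11 h12 h21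
  set P₂ : A := 1 - P₁ with hP₂
  -- projection facts
  have p11 : P₁ * P₁ = P₁ := hidem
  have p12 : P₁ * P₂ = 0 := by rw [hP₂, mul_sub, mul_one, hidem, sub_self]
  have p21 : P₂ * P₁ = 0 := by rw [hP₂, sub_mul, one_mul, hidem, sub_self]
  have p22 : P₂ * P₂ = P₂ := by
    rw [hP₂, mul_sub, mul_one, sub_mul, one_mul, hidem, sub_self, sub_zero]
  have hsa2 : star P₂ = P₂ := by rw [hP₂, star_sub, star_one, hsa]
  clear_value P₂
  -- Peirce facts
  have f1 : P₁ * a₁₁ = a₁₁ := cornerL hidem h11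
  have f2 : a₁₁ * P₁ = a₁₁ := cornerR hidem h11
  have f3 : P₂ * a₁₁ = 0 := cornerL0 p21 h11
  have f4 : a₁₁ * P₂ = 0 := cornerR0 p12 h11
  have f5 : P₁ * a₁₂ = a₁₂ := cornerL hidem h12
  have f6 : a₁₂ * P₂ = a₁₂ := cornerR p22 h12
  have f7 : P₂ * a₁₂ = 0 := cornerL0 p21 h12
  have f8 : a₁₂ * P₁ = 0 := cornerR0 p21 h12
  have f9 : P₂ * a₂₁ = a₂₁ := cornerL p22 h21
  have f10 : a₂₁ * P₁ = a₂₁ := cornerR hidem h21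
  have f11 : P₁ * a₂₁ = 0 := cornerL0 p12 h21
  have f12 : a₂₁ * P₂ = 0 := cornerR0 p12 h21
  -- star facts
  have g1 : P₁ * star a₁₁ = star a₁₁ := by have h' := starFact f2; rwa [hsa] at h'
  have g2 : star a₁₁ * P₁ = star a₁₁ := by have h' := starFact f1; rwa [hsa] at h'
  have g3 : star a₁₁ * P₂ = 0 := by have h' := starFact f3; rwa [hsa2, star_zero] at h'
  have g4 : P₂ * star a₁₁ = 0 := by have h' := starFact f4; rwa [hsa2, star_zero] at h'
  have g5 : star a₁₂ * P₁ = star a₁₂ := by have h' := starFact f5; rwa [hsa] at h'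
  have g6 : P₂ * star a₁₂ = star a₁₂ := by have h' := starFact f6; rwa [hsa2] at h'
  have g7 : star a₁₂ * P₂ = 0 := by have h' := starFact f7; rwa [hsa2, star_zero] at h'
  have g8 : P₁ * star a₁₂ = 0 := by have h' := starFact f8; rwa [hsa, star_zero] at h'
  have g9 : star a₂₁ * P₂ = star a₂₁ := by have h' := starFact f9; rwa [hsa2] at h'
  have g10 : P₁ * star a₂₁ = star a₂₁ := by have h' := starFact f10; rwa [hsa] at h'
  have g11 : star a₂₁ * P₁ = 0 := by have h' := starFact f11; rwa [hsa, star_zero] at h'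
  have g12 : P₂ * star a₂₁ = 0 := by have h' := starFact f12; rwa [hsa2, star_zero] at h'
  -- the zero triple products
  have Z1 : sJordanTriple a₁₁ P₁ P₂ = 0 := by
    simp only [sJordanTriple, sJordan, star_add, star_zero, star_mul, star_star, hsa, hsa2, mul_add,
      add_mul, mul_assoc, p11, p12, p21, p22, f1, f2, f3, f4, g1, g2, g3, g4, mul_zero,
      zero_mul, add_zero, zero_add] <;> abel
  have Z2 : sJordanTriple a₁₂ P₁ P₂ = 0 := by
    simp only [sJordanTriple, sJordan, star_add, star_zero, star_mul, star_star, hsa, hsa2, mul_add,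
      add_mul, mul_assoc, p11, p12, p21, p22, f5, f6, f7, f8, g5, g6, g7, g8, mul_zero,
      zero_mul, add_zero, zero_add] <;> abel
  have Z3 : sJordanTriple a₁₁ P₂ P₁ = 0 := by
    simp only [sJordanTriple, sJordan, star_add, star_zero, star_mul, star_star, hsa, hsa2, mul_add,
      add_mul, mul_assoc, p11, p12, p21, p22, f1, f2, f3, f4, g1, g2, g3, g4, mul_zero,
      zero_mul, add_zero, zero_add] <;> abel
  have Z4 : sJordanTriple a₂₁ P₂ P₁ = 0 := by
    simp only [sJordanTriple, sJordan, star_add, star_zero, star_mul, star_star, hsa, hsa2, mul_add,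
      add_mul, mul_assoc, p11, p12, p21, p22, f9, f10, f11, f12, g9, g10, g11, g12, mul_zero,
      zero_mul, add_zero, zero_add] <;> abel
  have Z5 : sJordanTriple (P₁ - P₂) 1 a₁₂ = 0 := by
    simp only [sJordanTriple, sJordan, star_add, star_sub, star_zero, star_mul, star_star, star_one,
      hsa, hsa2, mul_add, add_mul, mul_sub, sub_mul, mul_assoc, one_mul, mul_one,
      p11, p12, p21, p22, f5, f6, f7, f8, g5, g6, g7, g8, mul_zero, zero_mul,
      add_zero, zero_add, sub_zero, zero_sub] <;> abel
  have Z6 : sJordanTriple (P₁ - P₂) 1 a₂₁ = 0 := by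
    simp only [sJordanTriple, sJordan, star_add, star_sub, star_zero, star_mul, star_star, star_one,
      hsa, hsa2, mul_add, add_mul, mul_sub, sub_mul, mul_assoc, one_mul, mul_one,
      p11, p12, p21, p22, f9, f10, f11, f12, g9, g10, g11, g12, mul_zero, zero_mul,
      add_zero, zero_add, sub_zero, zero_sub] <;> abel
  -- the three key identities
  have K1 := key1 Φ hΦ a₁₁ a₁₂ a₂₁ P₁ P₂ Z1 Z2
  have K2 := key1 Φ hΦ a₁₁ a₂₁ a₁₂ P₂ P₁ Z3 Z4
  have K3 := key3 Φ hΦ (P₁ - P₂) 1 a₁₂ a₂₁ a₁₁ Z5 Z6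
  have ho1 : a₁₁ + a₂₁ + a₁₂ = a₁₁ + a₁₂ + a₂₁ := by abel
  have ho2 : a₁₂ + a₂₁ + a₁₁ = a₁₁ + a₁₂ + a₂₁ := by abel
  rw [ho1] at K2
  rw [ho2] at K3
  set w : A := Φ (a₁₁ + a₁₂ + a₂₁) - (Φ a₁₁ + Φ a₁₂ + Φ a₂₁) with hw_def
  have W1 : sJordanTriple w P₁ P₂ = 0 := by
    rw [hw_def, sJT_sub_left, K1, sJT_add_left, sJT_add_left]; abel
  have W2 : sJordanTriple w P₂ P₁ = 0 := by
    rw [hw_def, sJT_sub_left, K2, sJT_add_left, sJT_add_left]; abel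
  have W3 : sJordanTriple (P₁ - P₂) 1 w = 0 := by
    rw [hw_def, sJT_sub_right, K3, sJT_add_right, sJT_add_right]; abel
  clear_value w
  -- corner extraction
  have c21 : P₂ * (w * P₁) = 0 := by
    have h := congrArg (fun t => P₂ * (t * P₁)) W1
    simp only [sJordanTriple, sJordan, star_add, star_zero, star_mul, star_star, hsa, hsa2, mul_add,
      add_mul, mul_assoc, p11, p12, p21, p22, liftL p11, liftL p12, liftL p21, liftL p22,
      mul_zero, zero_mul, add_zero, zero_add] at h
    exact h
  have c12 : P₁ * (w * P₂) = 0 := by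
    have h := congrArg (fun t => P₁ * (t * P₂)) W2
    simp only [sJordanTriple, sJordan, star_add, star_zero, star_mul, star_star, hsa, hsa2, mul_add,
      add_mul, mul_assoc, p11, p12, p21, p22, liftL p11, liftL p12, liftL p21, liftL p22,
      mul_zero, zero_mul, add_zero, zero_add] at h
    exact h
  have c11 : P₁ * (w * P₁) = 0 := by
    have h := congrArg (fun t => P₁ * (t * P₁)) W3
    simp only [sJordanTriple, sJordan, star_add, star_sub, star_zero, star_mul, star_star, star_one,
      hsa, hsa2, mul_add, add_mul, mul_sub, sub_mul, mul_assoc, one_mul, mul_one,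
      p11, p12, p21, p22, liftL p11, liftL p12, liftL p21, liftL p22, mul_zero, zero_mul,
      add_zero, zero_add, sub_zero, zero_sub, mul_neg, neg_mul, neg_neg, neg_zero] at h
    abel_nf at h
    first
      | exact smul_cancel_int (by norm_num) h
      | exact smul_cancel_nat (by norm_num) h
      | exact h
  have c22 : P₂ * (w * P₂) = 0 := by
    have h := congrArg (fun t => P₂ * (t * P₂)) W3
    simp only [sJordanTriple, sJordan, star_add, star_sub, star_zero, star_mul, star_star, star_one,
      hsa, hsa2, mul_add, add_mul, mul_sub, sub_mul, mul_assoc, one_mul, mul_one,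
      p11, p12, p21, p22, liftL p11, liftL p12, liftL p21, liftL p22, mul_zero, zero_mul,
      add_zero, zero_add, sub_zero, zero_sub, mul_neg, neg_mul, neg_neg, neg_zero] at h
    abel_nf at h
    first
      | exact smul_cancel_int (by norm_num) h
      | exact smul_cancel_nat (by norm_num) h
      | exact h
  have hone : (1 : A) = P₁ + P₂ := by rw [hP₂]; abel
  have hw : w = 0 := by
    calc w = 1 * (w * 1) := by rw [one_mul, mul_one]
      _ = (P₁ + P₂) * (w * (P₁ + P₂)) := by rw [← hone]
      _ = P₁ * (w * P₁) + P₂ * (w * P₁) + (P₁ * (w * P₂) + P₂ * (w * P₂)) := by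
          simp only [mul_add, add_mul]
      _ = 0 := by rw [c11, c12, c21, c22]; simp
  rw [hw_def] at hw
  exact sub_eq_zero.mp hw
end

section
/- Let 𝒜 be a unital prime ∗-algebra over ℂ with a nontrivial projection P₁, and set P₂ = 1 − P₁. Let Φ: 𝒜 → 𝒜 be a map satisfying Φ(A ⋄ B ⋄ C) = Φ(A) ⋄ B ⋄ C + A ⋄ Φ(B) ⋄ C + A ⋄ B ⋄ Φ(C) for all A, B, C ∈ 𝒜. Then for every A₁₁ ∈ P₁𝒜P₁, A₁₂ ∈ P₁𝒜P₂, A₂₁ ∈ P₂𝒜P₁ and A₂₂ ∈ P₂𝒜P₂, one has Φ(A₁₁ + A₁₂ + A₂₁ + A₂₂) = Φ(A₁₁) + Φ(A₁₂) + Φ(A₂₁) + Φ(A₂₂). -/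
set_option linter.unusedSectionVars false

section aux
variable {A : Type*} [Ring A] [StarRing A]

lemma sJ_zero_left (z : A) : sJordan 0 z = 0 := by simp [sJordan]

lemma sJ_add_left (x y z : A) : sJordan (x + y) z = sJordan x z + sJordan y z := by
  simp only [sJordan, add_mul, mul_add, star_add]; abel

lemma sJ_sub_left (x y z : A) : sJordan (x - y) z = sJordan x z - sJordan y z := by
  simp only [sJordan, sub_mul, mul_sub, star_sub]; abel

lemma sJ_add_right (x y z : A) : sJordan x (y + z) = sJordan x y + sJordan x z := by
  simp only [sJordan, mul_add, add_mul]; abel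

lemma sJ_sub_right (x y z : A) : sJordan x (y - z) = sJordan x y - sJordan x z := by
  simp only [sJordan, mul_sub, sub_mul]; abel

lemma trip_add₁ (x y u v : A) :
    sJordanTriple (x + y) u v = sJordanTriple x u v + sJordanTriple y u v := by
  simp only [sJordanTriple, sJ_add_left]

lemma trip_sub₁ (x y u v : A) :
    sJordanTriple (x - y) u v = sJordanTriple x u v - sJordanTriple y u v := by
  simp only [sJordanTriple, sJ_sub_left]

lemma trip_add₃ (u v x y : A) :
    sJordanTriple u v (x + y) = sJordanTriple u v x + sJordanTriple u v y := by
  simp only [sJordanTriple, sJ_add_right]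

lemma trip_sub₃ (u v x y : A) :
    sJordanTriple u v (x - y) = sJordanTriple u v x - sJordanTriple u v y := by
  simp only [sJordanTriple, sJ_sub_right]

lemma pl {e f x : A} (he : e * e = e) (hx : x = e * x * f) : e * x = x := by
  conv_rhs => rw [hx]
  conv_lhs => rw [hx]
  simp only [← mul_assoc, he]

lemma pr {e f x : A} (hf : f * f = f) (hx : x = e * x * f) : x * f = x := by
  conv_rhs => rw [hx]
  conv_lhs => rw [hx]
  simp only [mul_assoc, hf]

lemma l0 {e f x : A} (g : A) (hge : g * e = 0) (hx : x = e * x * f) : g * x = 0 := by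
  conv_lhs => rw [hx]
  simp only [← mul_assoc, hge, zero_mul]

lemma r0 {e f x : A} (g : A) (hfg : f * g = 0) (hx : x = e * x * f) : x * g = 0 := by
  conv_lhs => rw [hx]
  simp only [mul_assoc, hfg, mul_zero]

lemma sp {e f x : A} (hx : x = e * x * f) : star x = star f * star x * star e := by
  conv_lhs => rw [hx]
  simp only [star_mul, mul_assoc]

lemma diag_zero {p q T : A} (hp : p * p = p) (hq : q * q = q) (hpq : p * q = 0)
    (hqp : q * p = 0) (hone : p + q = 1) (hhalf : ∀ x : A, x + x = 0 → x = 0)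
    (h1 : q * T + T * q = 0) (h2 : (p - q) * T + T * (p - q) = 0) : T = 0 := by
  have l1 : ∀ x : A, x * q * q = x * q := fun x => by rw [mul_assoc, hq]
  have l2 : ∀ x : A, x * p * p = x * p := fun x => by rw [mul_assoc, hp]
  have l3 : ∀ x : A, x * p * q = 0 := fun x => by rw [mul_assoc, hpq, mul_zero]
  have l4 : ∀ x : A, x * q * p = 0 := fun x => by rw [mul_assoc, hqp, mul_zero]
  have hqtq : q * T * q = 0 := by
    apply hhalf
    have e := congrArg (fun x => q * x * q) h1
    simpa only [mul_add, add_mul, ← mul_assoc, hq, l1, mul_zero, zero_mul] using e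
  have hqtp : q * T * p = 0 := by
    have e := congrArg (fun x => q * x * p) h1
    simpa only [mul_add, add_mul, ← mul_assoc, hq, l4, mul_zero, zero_mul, add_zero] using e
  have hptq : p * T * q = 0 := by
    have e := congrArg (fun x => p * x * q) h1
    simpa only [mul_add, add_mul, ← mul_assoc, hpq, l1, mul_zero, zero_mul, zero_add] using e
  have hptp : p * T * p = 0 := by
    apply hhalf
    have e := congrArg (fun x => p * x * p) h2
    simpa only [sub_mul, mul_sub, mul_add, add_mul, ← mul_assoc, hp, hpq, hqp, l2, l3, l4,
      mul_zero, zero_mul, sub_zero, zero_sub, add_zero, zero_add] using e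
  have hT : T = (p + q) * T * (p + q) := by rw [hone, one_mul, mul_one]
  rw [hT]
  simp only [add_mul, mul_add, hptp, hptq, hqtp, hqtq, add_zero, zero_add]

end aux

theorem stmt5 {A : Type*} [Ring A] [Algebra ℂ A] [StarRing A] [StarModule ℂ A]
    (hprime : ∀ a b : A, (∀ x : A, a * x * b = 0) → a = 0 ∨ b = 0)
    (P₁ : A) (hsa : star P₁ = P₁) (hidem : P₁ * P₁ = P₁)
    (hP0 : P₁ ≠ 0) (hP1 : P₁ ≠ 1)
    (Φ : A → A)
    (hΦ : ∀ a b c : A, Φ (sJordanTriple a b c) =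
      sJordanTriple (Φ a) b c + sJordanTriple a (Φ b) c + sJordanTriple a b (Φ c)) :
    ∀ a₁₁ a₁₂ a₂₁ a₂₂ : A, a₁₁ = P₁ * a₁₁ * P₁ → a₁₂ = P₁ * a₁₂ * (1 - P₁) →
      a₂₁ = (1 - P₁) * a₂₁ * P₁ → a₂₂ = (1 - P₁) * a₂₂ * (1 - P₁) →
      Φ (a₁₁ + a₁₂ + a₂₁ + a₂₂) = Φ a₁₁ + Φ a₁₂ + Φ a₂₁ + Φ a₂₂ := by
  -- basic facts
  have hΦ0 : Φ 0 = 0 := by simpa [sJordanTriple, sJordan] using hΦ 0 0 0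
  have hhalf : ∀ x : A, x + x = 0 → x = 0 := by
    intro x h
    have h2 : (2 : ℂ) • x = 0 := by rw [two_smul]; exact h
    calc x = (2⁻¹ : ℂ) • ((2 : ℂ) • x) := by rw [smul_smul]; norm_num
    _ = 0 := by rw [h2, smul_zero]
  -- splitting scheme, first slot
  have scheme1 : ∀ x y B C : A, sJordanTriple y B C = 0 →
      sJordanTriple (Φ (x + y) - Φ x - Φ y) B C = 0 := by
    intro x y B C h
    have h1 := hΦ (x + y) B C
    have h2 := hΦ x B C
    have h3 := hΦ y B C
    simp only [trip_add₁] at h1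
    rw [h, add_zero] at h1
    rw [h, hΦ0] at h3
    rw [trip_sub₁, trip_sub₁]
    have e1 : sJordanTriple (Φ (x + y)) B C =
        Φ (sJordanTriple x B C)
          - (sJordanTriple x (Φ B) C + sJordanTriple y (Φ B) C)
          - (sJordanTriple x B (Φ C) + sJordanTriple y B (Φ C)) := by
      rw [h1]; abel
    have e2 : sJordanTriple (Φ x) B C =
        Φ (sJordanTriple x B C) - sJordanTriple x (Φ B) C - sJordanTriple x B (Φ C) := by
      rw [h2]; abel
    have e3 : sJordanTriple (Φ y) B C =
        0 - sJordanTriple y (Φ B) C - sJordanTriple y B (Φ C) := by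
      rw [h3]; abel
    rw [e1, e2, e3]; abel
  -- splitting scheme, third slot
  have scheme3 : ∀ x y B C : A, sJordanTriple B C y = 0 →
      sJordanTriple B C (Φ (x + y) - Φ x - Φ y) = 0 := by
    intro x y B C h
    have h1 := hΦ B C (x + y)
    have h2 := hΦ B C x
    have h3 := hΦ B C y
    simp only [trip_add₃] at h1
    rw [h, add_zero] at h1
    rw [h, hΦ0] at h3
    rw [trip_sub₃, trip_sub₃]
    have e1 : sJordanTriple B C (Φ (x + y)) =
        Φ (sJordanTriple B C x)
          - (sJordanTriple (Φ B) C x + sJordanTriple (Φ B) C y)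
          - (sJordanTriple B (Φ C) x + sJordanTriple B (Φ C) y) := by
      rw [h1]; abel
    have e2 : sJordanTriple B C (Φ x) =
        Φ (sJordanTriple B C x) - sJordanTriple (Φ B) C x - sJordanTriple B (Φ C) x := by
      rw [h2]; abel
    have e3 : sJordanTriple B C (Φ y) =
        0 - sJordanTriple (Φ B) C y - sJordanTriple B (Φ C) y := by
      rw [h3]; abel
    rw [e1, e2, e3]; abel
  intro a₁₁ a₁₂ a₂₁ a₂₂ h11 h12 h21 h22
  obtain ⟨q, hqdef⟩ : ∃ q : A, q = 1 - P₁ := ⟨_, rfl⟩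
  rw [← hqdef] at h12 h21 h22
  have hstarq : star q = q := by rw [hqdef, star_sub, star_one, hsa]
  have hone : P₁ + q = 1 := by rw [hqdef]; abel
  have hone' : q + P₁ = 1 := by rw [hqdef]; abel
  have hpq' : P₁ * q = 0 := by rw [hqdef, mul_sub, mul_one, hidem, sub_self]
  have hqp' : q * P₁ = 0 := by rw [hqdef, sub_mul, one_mul, hidem, sub_self]
  have hqq : q * q = q := by
    rw [hqdef, mul_sub, mul_one, sub_mul, one_mul, hidem]; abel
  -- peirce facts
  have hs12 : star a₁₂ = q * star a₁₂ * P₁ := by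
    have := sp h12; rwa [hstarq, hsa] at this
  have hs21 : star a₂₁ = P₁ * star a₂₁ * q := by
    have := sp h21; rwa [hstarq, hsa] at this
  have f12p : P₁ * a₁₂ = a₁₂ := pl hidem h12
  have f12q : a₁₂ * q = a₁₂ := pr hqq h12
  have f12qa : q * a₁₂ = 0 := l0 q hqp' h12
  have f12ap : a₁₂ * P₁ = 0 := r0 P₁ hqp' h12
  have fs12p : P₁ * star a₁₂ = 0 := l0 P₁ hpq' hs12
  have f21q : q * a₂₁ = a₂₁ := pl hqq h21
  have f21p : a₂₁ * P₁ = a₂₁ := pr hidem h21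
  have f21pa : P₁ * a₂₁ = 0 := l0 P₁ hpq' h21
  have f21aq : a₂₁ * q = 0 := r0 q hpq' h21
  have fs21q : q * star a₂₁ = 0 := l0 q hqp' hs21
  have f11q : q * a₁₁ = 0 := l0 q hqp' h11
  have f11aq : a₁₁ * q = 0 := r0 q hpq' h11
  have f22p : P₁ * a₂₂ = 0 := l0 P₁ hpq' h22
  have f22ap : a₂₂ * P₁ = 0 := r0 P₁ hqp' h22
  -- the three "multiplier" triples
  set c : A := (2⁻¹ : ℂ) • (P₁ - q) with hcdef
  set c₂ : A := (2⁻¹ : ℂ) • q with hc2def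
  set c₃ : A := (2⁻¹ : ℂ) • P₁ with hc3def
  have hcc : sJordan 1 c = P₁ - q := by
    rw [sJordan, one_mul, star_one, mul_one, hcdef, ← add_smul]
    norm_num
  have hcc2 : sJordan 1 c₂ = q := by
    rw [sJordan, one_mul, star_one, mul_one, hc2def, ← add_smul]
    norm_num
  have hcc3 : sJordan 1 c₃ = P₁ := by
    rw [sJordan, one_mul, star_one, mul_one, hc3def, ← add_smul]
    norm_num
  have key_pm : ∀ x : A, sJordanTriple 1 c x = (P₁ - q) * x + x * (P₁ - q) := by
    intro x
    rw [sJordanTriple, hcc, sJordan, star_sub, hsa, hstarq]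
  have key_q : ∀ x : A, sJordanTriple 1 c₂ x = q * x + x * q := by
    intro x
    rw [sJordanTriple, hcc2, sJordan, hstarq]
  have key_p : ∀ x : A, sJordanTriple 1 c₃ x = P₁ * x + x * P₁ := by
    intro x
    rw [sJordanTriple, hcc3, sJordan, hsa]
  -- kill computations
  have hK1 : ∀ C : A, sJordanTriple a₂₁ q C = 0 := by
    intro C
    have h : sJordan a₂₁ q = 0 := by rw [sJordan, f21aq, fs21q, add_zero]
    rw [sJordanTriple, h, sJ_zero_left]
  have hK2 : ∀ C : A, sJordanTriple a₁₂ P₁ C = 0 := by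
    intro C
    have h : sJordan a₁₂ P₁ = 0 := by rw [sJordan, f12ap, fs12p, add_zero]
    rw [sJordanTriple, h, sJ_zero_left]
  have hK3 : sJordanTriple 1 c a₂₁ = 0 := by
    rw [key_pm]
    simp only [sub_mul, mul_sub, f21pa, f21q, f21p, f21aq, zero_sub, sub_zero]
    abel
  have hK3' : sJordanTriple 1 c (a₁₂ + a₂₁) = 0 := by
    rw [key_pm]
    simp only [mul_add, add_mul, sub_mul, mul_sub, f12p, f12qa, f21pa, f21q, f12ap, f12q,
      f21p, f21aq, zero_sub, sub_zero]
    abel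
  have hK4 : sJordanTriple 1 c₂ a₁₁ = 0 := by
    rw [key_q, f11q, f11aq, add_zero]
  have hK5 : sJordanTriple 1 c₃ a₂₂ = 0 := by
    rw [key_p, f22p, f22ap, add_zero]
  ------------------------------------------------------------------
  -- Stage 1: Φ(a₁₂ + a₂₁) = Φ a₁₂ + Φ a₂₁
  have hq1 := scheme1 a₁₂ a₂₁ q 1 (hK1 1)
  have hp1 := scheme1 a₂₁ a₁₂ P₁ 1 (hK2 1)
  rw [add_comm a₂₁ a₁₂, sub_right_comm] at hp1
  have hpm1 := scheme3 a₁₂ a₂₁ 1 c hK3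
  rw [key_pm] at hpm1
  obtain ⟨T₁, hT1def⟩ : ∃ T : A, Φ (a₁₂ + a₂₁) - Φ a₁₂ - Φ a₂₁ = T := ⟨_, rfl⟩
  rw [hT1def] at hq1 hp1 hpm1
  -- extract U-equations
  have hUq : T₁ * q + q * star T₁ = 0 := by
    apply hhalf
    simp only [sJordanTriple, sJordan, mul_one, one_mul, star_add, star_mul, star_star,
      hstarq] at hq1
    rw [← hq1]; abel
  have hUp : T₁ * P₁ + P₁ * star T₁ = 0 := by
    apply hhalf
    simp only [sJordanTriple, sJordan, mul_one, one_mul, star_add, star_mul, star_star,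
      hsa] at hp1
    rw [← hp1]; abel
  have hsumT : T₁ + star T₁ = 0 := by
    have e : (T₁ * q + q * star T₁) + (T₁ * P₁ + P₁ * star T₁) = 0 := by
      rw [hUq, hUp, add_zero]
    calc T₁ + star T₁ = T₁ * (q + P₁) + (q + P₁) * star T₁ := by
          rw [hone', mul_one, one_mul]
      _ = (T₁ * q + q * star T₁) + (T₁ * P₁ + P₁ * star T₁) := by noncomm_ring
      _ = 0 := e
  have hskew : star T₁ = -T₁ := by
    have := hsumT
    rw [add_comm] at this
    exact eq_neg_of_add_eq_zero_left this
  have hcomq : T₁ * q = q * T₁ := by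
    have h := hUq
    rw [hskew, mul_neg, add_neg_eq_zero] at h
    exact h
  have hcomp : T₁ * P₁ = P₁ * T₁ := by
    have h := hUp
    rw [hskew, mul_neg, add_neg_eq_zero] at h
    exact h
  have hxeq : P₁ * T₁ = q * T₁ := by
    apply sub_eq_zero.mp
    apply hhalf
    rw [← hpm1, sub_mul, mul_sub, hcomp, hcomq]
  have hPT : P₁ * T₁ = 0 := by
    calc P₁ * T₁ = P₁ * P₁ * T₁ := by rw [hidem]
      _ = P₁ * (P₁ * T₁) := by rw [mul_assoc]
      _ = P₁ * (q * T₁) := by rw [hxeq]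
      _ = P₁ * q * T₁ := by rw [mul_assoc]
      _ = 0 := by rw [hpq', zero_mul]
  have hqT : q * T₁ = 0 := by rw [← hxeq, hPT]
  have hT1zero : T₁ = 0 := by
    calc T₁ = 1 * T₁ := (one_mul T₁).symm
      _ = (P₁ + q) * T₁ := by rw [hone]
      _ = P₁ * T₁ + q * T₁ := by rw [add_mul]
      _ = 0 := by rw [hPT, hqT, add_zero]
  have st1 : Φ (a₁₂ + a₂₁) = Φ a₁₂ + Φ a₂₁ := by
    have h := hT1zero
    rw [← hT1def, sub_sub, sub_eq_zero] at h
    exact h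
  ------------------------------------------------------------------
  -- Stage 2a : Φ(a₁₁ + a₁₂ + a₂₁) = Φ a₁₁ + Φ(a₁₂ + a₂₁)
  have e2a₁ := scheme3 (a₁₂ + a₂₁) a₁₁ 1 c₂ hK4
  rw [key_q] at e2a₁
  rw [show a₁₂ + a₂₁ + a₁₁ = a₁₁ + a₁₂ + a₂₁ by abel] at e2a₁
  rw [sub_right_comm] at e2a₁
  have e2a₂ := scheme3 a₁₁ (a₁₂ + a₂₁) 1 c hK3'
  rw [key_pm] at e2a₂
  rw [show a₁₁ + (a₁₂ + a₂₁) = a₁₁ + a₁₂ + a₂₁ by abel] at e2a₂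
  have hT2a := diag_zero hidem hqq hpq' hqp' hone hhalf e2a₁ e2a₂
  have st2a : Φ (a₁₁ + a₁₂ + a₂₁) = Φ a₁₁ + Φ (a₁₂ + a₂₁) := by
    rw [sub_sub, sub_eq_zero] at hT2a
    exact hT2a
  ------------------------------------------------------------------
  -- Stage 2b : Φ(a₁₂ + a₂₁ + a₂₂) = Φ(a₁₂ + a₂₁) + Φ a₂₂
  have e2b₁ := scheme3 (a₁₂ + a₂₁) a₂₂ 1 c₃ hK5
  rw [key_p] at e2b₁
  have e2b₂ := scheme3 a₂₂ (a₁₂ + a₂₁) 1 c hK3'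
  rw [key_pm] at e2b₂
  rw [show a₂₂ + (a₁₂ + a₂₁) = a₁₂ + a₂₁ + a₂₂ by abel] at e2b₂
  rw [sub_right_comm] at e2b₂
  have e2b₂' : (q - P₁) * (Φ (a₁₂ + a₂₁ + a₂₂) - Φ (a₁₂ + a₂₁) - Φ a₂₂)
      + (Φ (a₁₂ + a₂₁ + a₂₂) - Φ (a₁₂ + a₂₁) - Φ a₂₂) * (q - P₁) = 0 := by
    have hneg : ∀ X : A, (q - P₁) * X + X * (q - P₁)
        = -((P₁ - q) * X + X * (P₁ - q)) := by
      intro X; noncomm_ring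
    rw [hneg, e2b₂, neg_zero]
  have hT2b := diag_zero hqq hidem hqp' hpq' hone' hhalf e2b₁ e2b₂'
  have st2b : Φ (a₁₂ + a₂₁ + a₂₂) = Φ (a₁₂ + a₂₁) + Φ a₂₂ := by
    rw [sub_sub, sub_eq_zero] at hT2b
    exact hT2b
  ------------------------------------------------------------------
  -- Stage 3
  have e3a := scheme3 (a₁₂ + a₂₁ + a₂₂) a₁₁ 1 c₂ hK4
  rw [key_q] at e3a
  rw [show a₁₂ + a₂₁ + a₂₂ + a₁₁ = a₁₁ + a₁₂ + a₂₁ + a₂₂ by abel] at e3a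
  rw [st2b, st1] at e3a
  rw [show Φ (a₁₁ + a₁₂ + a₂₁ + a₂₂) - (Φ a₁₂ + Φ a₂₁ + Φ a₂₂) - Φ a₁₁
      = Φ (a₁₁ + a₁₂ + a₂₁ + a₂₂) - Φ a₁₁ - Φ a₁₂ - Φ a₂₁ - Φ a₂₂ by abel] at e3a
  have e3b := scheme3 (a₁₁ + a₁₂ + a₂₁) a₂₂ 1 c₃ hK5
  rw [key_p] at e3b
  rw [st2a, st1] at e3b
  rw [show Φ (a₁₁ + a₁₂ + a₂₁ + a₂₂) - (Φ a₁₁ + (Φ a₁₂ + Φ a₂₁)) - Φ a₂₂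
      = Φ (a₁₁ + a₁₂ + a₂₁ + a₂₂) - Φ a₁₁ - Φ a₁₂ - Φ a₂₁ - Φ a₂₂ by abel] at e3b
  have h2 : (P₁ - q) * (Φ (a₁₁ + a₁₂ + a₂₁ + a₂₂) - Φ a₁₁ - Φ a₁₂ - Φ a₂₁ - Φ a₂₂)
      + (Φ (a₁₁ + a₁₂ + a₂₁ + a₂₂) - Φ a₁₁ - Φ a₁₂ - Φ a₂₁ - Φ a₂₂) * (P₁ - q) = 0 := by
    have hd : ∀ X : A, (P₁ - q) * X + X * (P₁ - q)
        = (P₁ * X + X * P₁) - (q * X + X * q) := by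
      intro X; noncomm_ring
    rw [hd, e3b, e3a, sub_zero]
  have hT0 := diag_zero hidem hqq hpq' hqp' hone hhalf e3a h2
  have hfin : Φ (a₁₁ + a₁₂ + a₂₁ + a₂₂) - (Φ a₁₁ + Φ a₁₂ + Φ a₂₁ + Φ a₂₂) = 0 := by
    rw [← hT0]; abel
  exact sub_eq_zero.mp hfin
end

section
/- Let 𝒜 be a unital ∗-algebra over ℂ and let Φ: 𝒜 → 𝒜 be a map satisfying Φ(A ⋄ B ⋄ C) = Φ(A) ⋄ B ⋄ C + A ⋄ Φ(B) ⋄ C + A ⋄ B ⋄ Φ(C) for all A, B, C ∈ 𝒜. If Φ(1) is self-adjoint and Φ(i·1) is self-adjoint, then Φ(i·1) = 0. -/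
theorem stmt9 {A : Type*} [Ring A] [Algebra ℂ A] [StarRing A] [StarModule ℂ A]
    (Φ : A → A)
    (hΦ : ∀ a b c : A, Φ (sJordanTriple a b c) =
      sJordanTriple (Φ a) b c + sJordanTriple a (Φ b) c + sJordanTriple a b (Φ c))
    (h1 : star (Φ 1) = Φ 1) (hi : star (Φ ((Complex.I : ℂ) • (1 : A))) = Φ ((Complex.I : ℂ) • (1 : A))) :
    Φ ((Complex.I : ℂ) • (1 : A)) = 0 := by
  have h0 : Φ 0 = 0 := by
    have := hΦ 0 0 0
    simpa [sJordanTriple, sJordan] using this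
  have hstarI : star ((Complex.I : ℂ) • (1 : A)) = -((Complex.I : ℂ) • (1 : A)) := by
    simp [star_smul, Complex.conj_I]
  have key := hΦ ((Complex.I : ℂ) • (1 : A)) 1 1
  set x := Φ ((Complex.I : ℂ) • (1 : A)) with hx
  have hII : sJordan ((Complex.I : ℂ) • (1 : A)) 1 = 0 := by
    simp [sJordan, hstarI]
  have hlhs : sJordanTriple ((Complex.I : ℂ) • (1 : A)) 1 1 = 0 := by
    simp [sJordanTriple, hII, sJordan]
  have t1 : sJordanTriple x 1 1 = x + x + (x + x) := by
    simp [sJordanTriple, sJordan, hi]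
  have t2 : sJordanTriple ((Complex.I : ℂ) • (1 : A)) (Φ 1) 1 = 0 := by
    simp [sJordanTriple, sJordan, hstarI, smul_mul_assoc, mul_smul_comm]
  have t3 : sJordanTriple ((Complex.I : ℂ) • (1 : A)) 1 (Φ 1) = 0 := by
    simp [sJordanTriple, hII, sJordan]
  rw [hlhs, h0, t1, t2, t3] at key
  have h4 : (4 : ℂ) • x = 0 := by
    have : x + x + (x + x) = (4 : ℂ) • x := by
      rw [show ((4:ℂ)) = 1 + 1 + (1 + 1) by norm_num]
      simp [add_smul]
    rw [this] at key
    simpa using key.symm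
  have := smul_eq_zero.mp h4
  rcases this with h | h
  · norm_num at h
  · exact h
end

section
/- Let 𝒜 be a unital prime ∗-algebra over ℂ with a nontrivial projection, and let Φ: 𝒜 → 𝒜 be a map satisfying Φ(A ⋄ B ⋄ C) = Φ(A) ⋄ B ⋄ C + A ⋄ Φ(B) ⋄ C + A ⋄ B ⋄ Φ(C) for all A, B, C ∈ 𝒜, such that Φ(1) and Φ(i·1) are self-adjoint. Then for all A, B ∈ 𝒜: Φ(AB + BA*) = Φ(A)B + AΦ(B) + Φ(B)A* + BΦ(A)*. -/
theorem stmt12 {A : Type*} [Ring A] [Algebra ℂ A] [StarRing A] [StarModule ℂ A]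
    (hprime : ∀ a b : A, (∀ x : A, a * x * b = 0) → a = 0 ∨ b = 0)
    (hproj : ∃ P : A, star P = P ∧ P * P = P ∧ P ≠ 0 ∧ P ≠ 1)
    (Φ : A → A)
    (hΦ : ∀ a b c : A, Φ (sJordanTriple a b c) =
      sJordanTriple (Φ a) b c + sJordanTriple a (Φ b) c + sJordanTriple a b (Φ c))
    (h1 : star (Φ 1) = Φ 1) (hi : star (Φ ((Complex.I : ℂ) • (1 : A))) = Φ ((Complex.I : ℂ) • (1 : A))) :
    ∀ a b : A, Φ (a * b + b * star a) =
      Φ a * b + a * Φ b + Φ b * star a + b * star (Φ a) := by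
  set o : A := (1/2 : ℂ) • (1 : A) with ho
  have hhalf : ∀ y : A, (1/2 : ℂ) • y + (1/2 : ℂ) • y = y := by
    intro y
    rw [← add_smul]
    norm_num
  have hstar_o : star o = o := by
    rw [ho, star_smul, star_one]
    norm_num
  -- `o` is a left unit for the star-Jordan product
  have h_o_left : ∀ y : A, sJordan o y = y := by
    intro y
    rw [sJordan, hstar_o, ho, smul_mul_assoc, one_mul, mul_smul_comm, mul_one]
    exact hhalf y
  set e : A := Φ o with he
  -- the basic relation from (o, o, c)
  have hG : ∀ c : A, sJordanTriple e o c + sJordan e c = 0 := by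
    intro c
    have h := hΦ o o c
    rw [show sJordanTriple o o c = c by rw [sJordanTriple, h_o_left, h_o_left],
        show sJordanTriple o e c = sJordan e c by rw [sJordanTriple, h_o_left],
        show sJordanTriple o o (Φ c) = Φ c by rw [sJordanTriple, h_o_left, h_o_left],
        ← he] at h
    calc sJordanTriple e o c + sJordan e c
        = (sJordanTriple e o c + sJordan e c + Φ c) - Φ c := by abel
      _ = Φ c - Φ c := by rw [← h]
      _ = 0 := sub_self _
  -- compute e ⋄ o
  have h_eo : sJordan e o = (1/2 : ℂ) • (e + star e) := by
    rw [sJordan, ho, mul_smul_comm, mul_one, smul_mul_assoc, one_mul, smul_add]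
  -- from c = 1 : e + star e = 0
  have hs : e + star e = 0 := by
    have h := hG 1
    rw [sJordanTriple, h_eo] at h
    have hst : star ((1/2 : ℂ) • (e + star e)) = (1/2 : ℂ) • (e + star e) := by
      rw [star_smul, star_add, star_star, add_comm (star e) e]
      norm_num
    rw [sJordan, mul_one, one_mul, hst, hhalf, sJordan, mul_one, one_mul] at h
    -- h : (e + star e) + (e + star e) = 0
    have h2 : (2 : ℂ) • (e + star e) = 0 := by rw [two_smul]; exact h
    calc e + star e = (1/2 : ℂ) • ((2 : ℂ) • (e + star e)) := by
          rw [smul_smul]; norm_num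
      _ = 0 := by rw [h2, smul_zero]
  -- hence e ⋄ c = 0 for all c
  have hz : ∀ c : A, sJordan e c = 0 := by
    intro c
    have h := hG c
    rw [sJordanTriple, h_eo, hs, smul_zero] at h
    rw [show sJordan (0 : A) c = 0 by rw [sJordan, star_zero, zero_mul, mul_zero, add_zero]] at h
    simpa using h
  -- main computation from (o, a, b)
  intro a b
  have h := hΦ o a b
  rw [show sJordanTriple o a b = sJordan a b by rw [sJordanTriple, h_o_left],
      show sJordanTriple o (Φ a) b = sJordan (Φ a) b by rw [sJordanTriple, h_o_left],
      show sJordanTriple o a (Φ b) = sJordan a (Φ b) by rw [sJordanTriple, h_o_left],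
      ← he,
      show sJordanTriple e a b = 0 by
        rw [sJordanTriple, hz a, sJordan, star_zero, zero_mul, mul_zero, add_zero],
      zero_add] at h
  rw [show a * b + b * star a = sJordan a b from rfl, h, sJordan, sJordan]
  abel
end
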